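/- arXiv:2511.01174 — 10 statements merged into one kernel-verified Lean document; each statement's English description precedes it below -/
import Mathlib

section
/- For every prime p ≥ 3 and all integers n, k ≥ 0 with k ≤ (p-1)/2, the sequence u(n) = ∑_{k=0}^n (-1)^k C(n,k) C(2n,k) satisfies u(pn + k) ≡ u(n) u(k) (mod p). -/
open Polynomial

def u (n : ℕ) : ℤ :=
  ∑ j ∈ Finset.range (n + 1), (-1 : ℤ) ^ j * (n.choose j) * ((2 * n).choose j)

lemma u_eq_coeff (n : ℕ) :
    u n = (((X - 1 : ℤ[X]) ^ n) * (X + 1) ^ (2 * n)).coeff n := by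
  rw [coeff_mul, Finset.Nat.sum_antidiagonal_eq_sum_range_succ
      (f := fun i j => ((X - 1 : ℤ[X]) ^ n).coeff i * ((X + 1 : ℤ[X]) ^ (2*n)).coeff j)]
  rw [u, ← Finset.sum_range_reflect]
  refine Finset.sum_congr rfl fun j hj => ?_
  have hjn : j ≤ n := Nat.lt_succ_iff.mp (Finset.mem_range.mp hj)
  have h1 : (X - 1 : ℤ[X]) = X + C (-1) := by simp [sub_eq_add_neg]
  rw [h1, coeff_X_add_C_pow, coeff_X_add_one_pow]
  have h2 : n + 1 - 1 - j = n - j := by omega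
  rw [h2, Nat.choose_symm hjn]

lemma key_coeff {p : ℕ} (hp : 0 < p) (n k : ℕ) (g h : (ZMod p)[X])
    (hh : h.natDegree ≤ 3 * k) (h2k : 2 * k < p) :
    ((Polynomial.expand (ZMod p) p g) * h).coeff (p * n + k) =
      g.coeff n * h.coeff k := by
  rw [coeff_mul]
  rw [Finset.sum_eq_single (p * n, k)]
  · rw [coeff_expand_mul' hp]
  · rintro ⟨i, j⟩ hmem hne
    rw [Finset.HasAntidiagonal.mem_antidiagonal] at hmem
    rw [coeff_expand hp]
    split_ifs with hdvd
    · obtain ⟨m, rfl⟩ := hdvd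
      by_cases hj : h.natDegree < j
      · rw [coeff_eq_zero_of_natDegree_lt hj, mul_zero]
      · exfalso
        push_neg at hj
        have hj3 : j ≤ 3 * k := le_trans hj hh
        have : m = n := by nlinarith
        subst this
        exact hne (by simp at hmem ⊢; omega)
    · rw [zero_mul]
  · intro habs
    simp at habs

theorem stmt_0 (p : ℕ) (hp : p.Prime) (hp3 : 3 ≤ p) (n k : ℕ)
    (hk : k ≤ (p - 1) / 2) :
    u (p * n + k) ≡ u n * u k [ZMOD (p : ℤ)] := by
  haveI : Fact p.Prime := ⟨hp⟩
  have hp0 : 0 < p := hp.pos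
  have h2k : 2 * k < p := by omega
  set F : (ZMod p)[X] := (X - 1) * (X + 1) ^ 2 with hF
  have hFm : ∀ m : ℕ, F ^ m =
      Polynomial.map (Int.castRingHom (ZMod p)) (((X - 1 : ℤ[X]) ^ m) * (X + 1) ^ (2 * m)) := by
    intro m
    rw [Polynomial.map_mul, Polynomial.map_pow, Polynomial.map_pow]
    simp only [Polynomial.map_sub, Polynomial.map_add, Polynomial.map_X, Polynomial.map_one]
    rw [hF, mul_pow, ← pow_mul, mul_comm 2 m]
  have hu : ∀ m : ℕ, ((u m : ZMod p)) = (F ^ m).coeff m := by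
    intro m
    rw [hFm, coeff_map, u_eq_coeff]
    simp
  have hfrob : F ^ p = Polynomial.expand (ZMod p) p F := by
    rw [← Polynomial.map_frobenius_expand (p := p) F, ZMod.frobenius_zmod, Polynomial.map_id]
  have hsplit : F ^ (p * n + k) = (Polynomial.expand (ZMod p) p) (F ^ n) * F ^ k := by
    rw [pow_add, pow_mul, hfrob, ← map_pow]
  have hdegF : F.natDegree ≤ 3 := by rw [hF]; compute_degree
  have hdeg : (F ^ k).natDegree ≤ 3 * k := by
    refine le_trans (Polynomial.natDegree_pow_le) ?_
    calc k * F.natDegree ≤ k * 3 := Nat.mul_le_mul_left _ hdegF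
    _ = 3 * k := by ring
  have main : ((u (p * n + k) : ZMod p)) = ((u n * u k : ℤ) : ZMod p) := by
    rw [hu, hsplit, key_coeff hp0 n k _ _ hdeg h2k, ← hu, ← hu]
    push_cast
    ring
  exact (ZMod.intCast_eq_intCast_iff _ _ _).mp main
end

section
/- Let p be a prime and let u(n) = ∑_{k=0}^n (-1)^k C(n,k) C(2n,k) and w(m) = ∑_{k=0}^{m-1} (-1)^k C(2m-1,k) C(m-1,k). For all integers n, k ≥ 1 with (p+1)/2 ≤ k < p, u(pn + k) ≡ w(n+1) u(k) (mod p). -/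
def w (m : ℕ) : ℤ :=
  ∑ j ∈ Finset.range m, (-1 : ℤ) ^ j * ((2 * m - 1).choose j) * ((m - 1).choose j)

open Finset

theorem stmt_5 (p : ℕ) (hp : p.Prime) (n k : ℕ) (hn : 1 ≤ n) (hk1 : 1 ≤ k)
    (hk2 : (p + 1) / 2 ≤ k) (hk3 : k < p) :
    u (p * n + k) ≡ w (n + 1) * u k [ZMOD (p : ℤ)] := by
  haveI : Fact p.Prime := ⟨hp⟩
  have hp2 : 2 ≤ p := hp.two_le
  have hp0 : 0 < p := by omega
  have hpk : p ≤ 2 * k := by omega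
  set r := 2 * k - p with hrdef
  have hrp : r < p := by omega
  have lucas : ∀ N j : ℕ, ((N.choose j : ZMod p)) =
      ((N % p).choose (j % p) : ZMod p) * ((N / p).choose (j / p) : ZMod p) := by
    intro N j
    have h := Choose.choose_modEq_choose_mod_mul_choose_div (p := p) (n := N) (k := j)
    rw [← ZMod.intCast_eq_intCast_iff] at h
    push_cast at h
    exact h
  have hneg : ((-1 : ZMod p)) ^ p = -1 := by
    have := ZMod.pow_card (-1 : ZMod p)
    exact this
  rw [← ZMod.intCast_eq_intCast_iff]
  have e1 : 2 * (n + 1) - 1 = 2 * n + 1 := by omega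
  have e2 : n + 1 - 1 = n := by omega
  simp only [u, w, e1, e2]
  push_cast
  -- abbreviation for the general term
  set F : ℕ → ZMod p := fun j =>
    (-1 : ZMod p) ^ j * ((p * n + k).choose j) * ((2 * (p * n + k)).choose j) with hF
  have hNmod : (p * n + k) % p = k := by
    rw [Nat.mul_add_mod, Nat.mod_eq_of_lt hk3]
  have hNdiv : (p * n + k) / p = n := by
    rw [Nat.mul_add_div hp0, Nat.div_eq_of_lt hk3, add_zero]
  have hmul1 : p * (2 * n + 1) = 2 * (p * n) + p := by ring
  have h2N : 2 * (p * n + k) = p * (2 * n + 1) + r := by omega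
  have h2Nmod : (2 * (p * n + k)) % p = r := by
    rw [h2N, Nat.mul_add_mod, Nat.mod_eq_of_lt hrp]
  have h2Ndiv : (2 * (p * n + k)) / p = 2 * n + 1 := by
    rw [h2N, Nat.mul_add_div hp0, Nat.div_eq_of_lt hrp, add_zero]
  have key1 : ∑ j ∈ range (p * n + k + 1), F j
      = (∑ a ∈ range (n + 1), (-1 : ZMod p) ^ a * (n.choose a) * ((2 * n + 1).choose a)) *
        (∑ b ∈ range p, (-1 : ZMod p) ^ b * (k.choose b) * (r.choose b)) := by
    have step1 : ∑ j ∈ range (p * n + k + 1), F j = ∑ j ∈ range (p * (n + 1)), F j := by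
      have hmul2 : p * (n + 1) = p * n + p := by ring
      apply sum_subset
      · apply range_subset_range.mpr; omega
      · intro j hj hj'
        simp only [mem_range, not_lt] at hj hj'
        have : (p * n + k).choose j = 0 := Nat.choose_eq_zero_of_lt (by omega)
        simp [hF, this]
    rw [step1, sum_mul_sum, ← sum_product']
    apply sum_nbij' (fun j => (j / p, j % p)) (fun x => p * x.1 + x.2)
    · intro j hj
      simp only [mem_range] at hj
      simp only [mem_product, mem_range]
      refine ⟨?_, Nat.mod_lt _ hp0⟩
      have : j / p < (p * (n + 1)) / p := by
        apply Nat.div_lt_div_of_lt_of_dvd (dvd_mul_right p (n + 1)) hj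
      rwa [Nat.mul_div_cancel_left _ hp0] at this
    · intro x hx
      simp only [mem_product, mem_range] at hx
      simp only [mem_range]
      have h1 : x.1 ≤ n := by omega
      calc p * x.1 + x.2 < p * x.1 + p := by omega
        _ = p * (x.1 + 1) := by ring
        _ ≤ p * (n + 1) := Nat.mul_le_mul_left p (by omega)
    · intro j _
      exact Nat.div_add_mod' j p ▸ by rw [Nat.div_add_mod]
    · intro x hx
      simp only [mem_product, mem_range] at hx
      have hd : (p * x.1 + x.2) / p = x.1 := by
        rw [Nat.mul_add_div hp0, Nat.div_eq_of_lt hx.2, add_zero]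
      have hm : (p * x.1 + x.2) % p = x.2 := by
        rw [Nat.mul_add_mod, Nat.mod_eq_of_lt hx.2]
      exact Prod.ext hd hm
    · intro j _
      simp only [hF]
      rw [lucas (p * n + k) j, lucas (2 * (p * n + k)) j,
        hNmod, hNdiv, h2Nmod, h2Ndiv]
      have hsign : (-1 : ZMod p) ^ j = (-1) ^ (j / p) * (-1) ^ (j % p) := by
        conv_lhs => rw [← Nat.div_add_mod j p]
        rw [pow_add, pow_mul, hneg]
      rw [hsign]
      ring
  have key2 : ∑ b ∈ range p, (-1 : ZMod p) ^ b * (k.choose b) * (r.choose b)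
      = ∑ j ∈ range (k + 1), (-1 : ZMod p) ^ j * (k.choose j) * ((2 * k).choose j) := by
    rw [eq_comm]
    have step1 : ∑ j ∈ range (k + 1), (-1 : ZMod p) ^ j * (k.choose j) * ((2 * k).choose j)
        = ∑ j ∈ range p, (-1 : ZMod p) ^ j * (k.choose j) * ((2 * k).choose j) := by
      apply sum_subset
      · apply range_subset_range.mpr; omega
      · intro j hj hj'
        simp only [mem_range, not_lt] at hj hj'
        have : k.choose j = 0 := Nat.choose_eq_zero_of_lt (by omega)
        simp [this]
    rw [step1]
    apply sum_congr rfl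
    intro j hj
    simp only [mem_range] at hj
    have h2k : 2 * k = p * 1 + r := by omega
    have : ((2 * k).choose j : ZMod p) = (r.choose j : ZMod p) := by
      rw [lucas (2 * k) j, h2k, Nat.mul_add_mod, Nat.mod_eq_of_lt hrp,
        Nat.mul_add_div hp0, Nat.div_eq_of_lt hrp, Nat.mod_eq_of_lt hj,
        Nat.div_eq_of_lt hj]
      simp
    rw [this]
  have key3 : (∑ a ∈ range (n + 1), (-1 : ZMod p) ^ a * (n.choose a) * ((2 * n + 1).choose a))
      = ∑ j ∈ range (n + 1), (-1 : ZMod p) ^ j * ((2 * n + 1).choose j) * (n.choose j) := by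
    apply sum_congr rfl
    intro j _
    ring
  rw [key1, key2, key3]
end

section
/- Let p be a prime and (p+1)/2 ≤ k < p. Then the coefficient of x^p in ((1+x)^2(1-1/x))^k is congruent modulo p to the constant term of ((1+x)^2(1-1/x))^k. -/
open LaurentPolynomial Polynomial

private lemma coeff_toLaurent' {R : Type*} [Semiring R] (f : R[X]) (n : ℕ) :
    (toLaurent f).coeff (n : ℤ) = f.coeff n := by
  rw [coeff_toLaurent]
  exact Finsupp.mapDomain_apply Nat.castEmbedding.injective _ n

private lemma mul_T_apply {R : Type*} [Semiring R] (f : R[T;T⁻¹]) (m n : ℤ) :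
    (f * T m : R[T;T⁻¹]).coeff n = f.coeff (n - m) := by
  simpa [sub_eq_add_neg] using AddMonoidAlgebra.coeff_mul_single_apply f 1 m n

private lemma key_eq (k : ℕ) :
    (((1 + T 1) ^ 2 * (1 - T (-1)) : LaurentPolynomial ℤ)) ^ k
      = toLaurent (((1 + X) ^ 2 * (X - 1) : ℤ[X]) ^ k) * T (-(k : ℤ)) := by
  have h1 : ((1 + T 1) ^ 2 * (1 - T (-1)) : LaurentPolynomial ℤ)
      = toLaurent ((1 + X) ^ 2 * (X - 1) : ℤ[X]) * T (-1) := by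
    rw [map_mul, map_pow, map_add, map_one, Polynomial.toLaurent_X, map_sub, map_one,
      Polynomial.toLaurent_X, mul_assoc, sub_mul, one_mul, ← T_add]
    norm_num
  rw [h1, mul_pow, T_pow, map_pow]
  congr 1
  push_cast
  ring

theorem stmt_6 (p : ℕ) (hp : p.Prime) (k : ℕ) (hk2 : (p + 1) / 2 ≤ k) (hk3 : k < p) :
    ((((1 + T 1) ^ 2 * (1 - T (-1)) : LaurentPolynomial ℤ)) ^ k).coeff (p : ℤ) ≡
      ((((1 + T 1) ^ 2 * (1 - T (-1)) : LaurentPolynomial ℤ)) ^ k).coeff 0 [ZMOD (p : ℤ)] := by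
  have hp2 : 2 ≤ p := hp.two_le
  have hpk : p ≤ 2 * k := by omega
  -- rewrite coefficients via polynomial coefficients
  have hQ : ∀ m : ℕ,
      ((((1 + T 1) ^ 2 * (1 - T (-1)) : LaurentPolynomial ℤ)) ^ k).coeff (m : ℤ)
        = (((1 + X) ^ 2 * (X - 1) : ℤ[X]) ^ k).coeff (m + k) := by
    intro m
    rw [key_eq, mul_T_apply, sub_neg_eq_add]
    have : (m : ℤ) + (k : ℤ) = ((m + k : ℕ) : ℤ) := by push_cast; ring
    rw [this, coeff_toLaurent']
  have h0 := hQ 0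
  simp only [Nat.cast_zero, zero_add] at h0
  rw [hQ p, h0]
  -- now a statement about integer polynomial coefficients mod p
  have : Fact p.Prime := ⟨hp⟩
  rw [← ZMod.intCast_eq_intCast_iff]
  have hmap : ∀ m : ℕ, (((((1 + X) ^ 2 * (X - 1) : ℤ[X]) ^ k).coeff m : ℤ) : ZMod p)
      = ((((1 + X) ^ 2 * (X - 1) : (ZMod p)[X]) ^ k).coeff m) := by
    intro m
    rw [show (((1 + X) ^ 2 * (X - 1) : (ZMod p)[X]) ^ k)
        = (((1 + X) ^ 2 * (X - 1) : ℤ[X]) ^ k).map (Int.castRingHom (ZMod p)) by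
      simp [Polynomial.map_pow], Polynomial.coeff_map]
    rfl
  rw [hmap, hmap]
  -- work over ZMod p
  set R := ZMod p
  have hfact : ((1 + X) ^ 2 * (X - 1) : R[X]) ^ k
      = (1 + X ^ p) * ((1 + X) ^ (2 * k - p) * (X - 1) ^ k) := by
    have h2k : (1 + X : R[X]) ^ (2 * k) = (1 + X) ^ p * (1 + X) ^ (2 * k - p) := by
      rw [← pow_add]; congr 1; omega
    rw [mul_pow, ← pow_mul, h2k, add_pow_char]
    ring
  set g : R[X] := (1 + X) ^ (2 * k - p) * (X - 1) ^ k with hg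
  have hdeg : g.natDegree ≤ 2 * k - p + k := by
    refine le_trans (Polynomial.natDegree_mul_le) ?_
    gcongr
    · refine le_trans (Polynomial.natDegree_pow_le) ?_
      have : (1 + X : R[X]).natDegree ≤ 1 :=
        le_trans (Polynomial.natDegree_add_le _ _) (by simp)
      calc (2 * k - p) * (1 + X : R[X]).natDegree ≤ (2 * k - p) * 1 := by gcongr
        _ = 2 * k - p := by ring
    · refine le_trans (Polynomial.natDegree_pow_le) ?_
      have : (X - 1 : R[X]).natDegree ≤ 1 :=
        le_trans (Polynomial.natDegree_sub_le _ _) (by simp)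
      calc k * (X - 1 : R[X]).natDegree ≤ k * 1 := by gcongr
        _ = k := by ring
  have expand : ((1 + X ^ p) * g : R[X]) = g + X ^ p * g := by ring
  rw [hfact, expand]
  rw [Polynomial.coeff_add, Polynomial.coeff_add]
  have h1 : g.coeff (p + k) = 0 := by
    apply Polynomial.coeff_eq_zero_of_natDegree_lt
    omega
  have h2 : (X ^ p * g : R[X]).coeff (p + k) = g.coeff k := by
    rw [add_comm p k]; exact Polynomial.coeff_X_pow_mul g p k
  have h3 : (X ^ p * g : R[X]).coeff k = 0 := by
    rw [mul_comm, Polynomial.coeff_mul_X_pow']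
    simp [Nat.not_le.mpr hk3]
  rw [h1, h2, h3, zero_add, add_zero]
end

section
/- Let p be a prime and (p+1)/2 ≤ k < p. Then the constant term of (1 - x^{-p}) ((1+x)^2(1-1/x))^k is divisible by p. -/
open LaurentPolynomial

open Polynomial in
lemma aux_const_coeff (g : ℤ[X]) (m : ℕ) :
    ((Polynomial.toLaurent g) * T (-(m : ℤ)) : LaurentPolynomial ℤ).coeff 0 = g.coeff m := by
  rw [show (T (-(m : ℤ)) : LaurentPolynomial ℤ)
      = AddMonoidAlgebra.single (-(m : ℤ)) (1 : ℤ) from rfl,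
    AddMonoidAlgebra.coeff_mul_single_apply, mul_one]
  simp only [zero_sub, neg_neg, zero_add]
  rw [coeff_toLaurent]
  exact Finsupp.mapDomain_apply Nat.castEmbedding.injective g.toFinsupp.coeff m

theorem stmt_7 (p : ℕ) (hp : p.Prime) (k : ℕ) (hk2 : (p + 1) / 2 ≤ k) (hk3 : k < p) :
    (p : ℤ) ∣ (((1 - T (-(p : ℤ))) * ((1 + T 1) ^ 2 * (1 - T (-1))) ^ k :
      LaurentPolynomial ℤ)).coeff 0 := by
  classical
  set f : Polynomial ℤ := (Polynomial.X ^ p - 1) *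
      ((1 + Polynomial.X) ^ 2 * (Polynomial.X - 1)) ^ k with hf
  have key : ((1 - T (-(p : ℤ))) * ((1 + T 1) ^ 2 * (1 - T (-1))) ^ k :
      LaurentPolynomial ℤ) = (Polynomial.toLaurent f) * T (-((p + k : ℕ) : ℤ)) := by
    have h1 : (1 - T (-(p:ℤ)) : LaurentPolynomial ℤ) = (T (p:ℤ) - 1) * T (-(p:ℤ)) := by
      rw [sub_mul, ← T_add, one_mul]
      simp
    have h2 : (1 - T (-1) : LaurentPolynomial ℤ) = (T 1 - 1) * T (-1) := by
      rw [sub_mul, ← T_add, one_mul]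
      simp
    have h3 : (Polynomial.toLaurent f : LaurentPolynomial ℤ)
        = (T (p:ℤ) - 1) * ((1 + T 1) ^ 2 * (T 1 - 1)) ^ k := by
      simp [hf, map_mul, map_sub, map_pow, map_add, Polynomial.toLaurent_X_pow,
        Polynomial.toLaurent_X, map_one]
    have hT : (T (-((p + k : ℕ) : ℤ)) : LaurentPolynomial ℤ)
        = T (-(p:ℤ)) * T ((k:ℤ) * (-1)) := by
      rw [← T_add]
      congr 1
      push_cast
      ring
    have hA : (((1 + T 1) ^ 2 * ((T 1 - 1) * T (-1)) : LaurentPolynomial ℤ)) ^ k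
        = ((1 + T 1) ^ 2 * (T 1 - 1)) ^ k * T ((k:ℤ) * (-1)) := by
      rw [← mul_assoc, mul_pow, T_pow]
    rw [h1, h2, h3, hT, hA]
    ring
  rw [key, aux_const_coeff]
  set h : Polynomial ℤ := ((1 + Polynomial.X) ^ 2 * (Polynomial.X - 1)) ^ k with hh
  have hcoef : f.coeff (p + k) = h.coeff k - h.coeff (p + k) := by
    rw [hf, sub_mul, one_mul, Polynomial.coeff_sub]
    congr 1
    rw [Polynomial.X_pow_mul, Polynomial.coeff_mul_X_pow']
    simp
  rw [hcoef]
  haveI : Fact p.Prime := ⟨hp⟩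
  have hmod : ((h.coeff k - h.coeff (p + k) : ℤ) : ZMod p) = 0 := by
    push_cast
    have hmapk : ((h.coeff k : ℤ) : ZMod p)
        = (h.map (Int.castRingHom (ZMod p))).coeff k := by
      simp [Polynomial.coeff_map]
    have hmappk : ((h.coeff (p + k) : ℤ) : ZMod p)
        = (h.map (Int.castRingHom (ZMod p))).coeff (p + k) := by
      simp [Polynomial.coeff_map]
    rw [hmapk, hmappk]
    set H : Polynomial (ZMod p) := h.map (Int.castRingHom (ZMod p)) with hH
    have hp2k : p ≤ 2 * k := by omega
    have hHeq : H = (1 + Polynomial.X ^ p) *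
        ((1 + Polynomial.X) ^ (2 * k - p) * (Polynomial.X - 1) ^ k) := by
      rw [hH, hh]
      rw [Polynomial.map_pow, Polynomial.map_mul, Polynomial.map_pow, Polynomial.map_add,
        Polynomial.map_sub, Polynomial.map_one, Polynomial.map_X]
      rw [mul_pow, ← pow_mul]
      have hsplit : (1 + Polynomial.X : Polynomial (ZMod p)) ^ (2 * k)
          = (1 + Polynomial.X) ^ p * (1 + Polynomial.X) ^ (2 * k - p) := by
        rw [← pow_add]
        congr 1
        omega
      rw [hsplit]
      have hchar : (1 + Polynomial.X : Polynomial (ZMod p)) ^ p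
          = 1 + Polynomial.X ^ p := by
        rw [add_pow_char, one_pow]
      rw [hchar]
      ring
    set G : Polynomial (ZMod p) := (1 + Polynomial.X) ^ (2 * k - p) *
        (Polynomial.X - 1) ^ k with hG
    have hGdeg : G.natDegree ≤ (2 * k - p) + k := by
      refine le_trans (Polynomial.natDegree_mul_le) (add_le_add ?_ ?_)
      · refine le_trans (Polynomial.natDegree_pow_le) ?_
        have : (1 + Polynomial.X : Polynomial (ZMod p)).natDegree ≤ 1 :=
          le_trans (Polynomial.natDegree_add_le _ _) (by simp)
        calc (2 * k - p) * (1 + Polynomial.X : Polynomial (ZMod p)).natDegree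
            ≤ (2 * k - p) * 1 := Nat.mul_le_mul_left _ this
          _ = 2 * k - p := by ring
      · refine le_trans (Polynomial.natDegree_pow_le) ?_
        have : (Polynomial.X - 1 : Polynomial (ZMod p)).natDegree ≤ 1 :=
          le_trans (Polynomial.natDegree_sub_le _ _) (by simp)
        calc k * (Polynomial.X - 1 : Polynomial (ZMod p)).natDegree
            ≤ k * 1 := Nat.mul_le_mul_left _ this
          _ = k := by ring
    have hGk : G.coeff (p + k) = 0 := by
      apply Polynomial.coeff_eq_zero_of_natDegree_lt
      omega
    have hck : H.coeff k = G.coeff k := by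
      rw [hHeq, add_mul, one_mul, Polynomial.coeff_add, Polynomial.X_pow_mul,
        Polynomial.coeff_mul_X_pow']
      simp [not_le.mpr hk3]
    have hcpk : H.coeff (p + k) = G.coeff k := by
      rw [hHeq, add_mul, one_mul, Polynomial.coeff_add, Polynomial.X_pow_mul,
        Polynomial.coeff_mul_X_pow']
      simp [hGk, Nat.le_add_right, Nat.add_sub_cancel_left]
    rw [hck, hcpk, sub_self]
  have := (ZMod.intCast_zmod_eq_zero_iff_dvd _ p).mp hmod
  exact_mod_cast this
end

section
/- Let p be a prime, P ∈ ℤ[x, x⁻¹] a Laurent polynomial whose support is contained in the interval [-a, b] with a, b ≥ 0, and let k ≥ 0 satisfy ak < p and bk < p. Then for all n ≥ 0, the constant term of P(x)^{pn+k} is congruent modulo p to the product of the constant terms of P(x)^n and P(x)^k. -/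
open LaurentPolynomial

open Finsupp in
noncomputable def phiAux (p : ℕ) : LaurentPolynomial ℤ →+* LaurentPolynomial (ZMod p) :=
  AddMonoidAlgebra.liftNCRingHom
    ((AddMonoidAlgebra.singleZeroRingHom).comp (Int.castRingHom (ZMod p)))
    (AddMonoidAlgebra.of (ZMod p) ℤ) (fun _ _ => Commute.all _ _)

lemma phiAux_single (p : ℕ) (u c : ℤ) :
    phiAux p (AddMonoidAlgebra.single u c) = AddMonoidAlgebra.single u (c : ZMod p) := by
  have h0 : phiAux p (AddMonoidAlgebra.single u c)
      = AddMonoidAlgebra.liftNC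
          ((AddMonoidAlgebra.singleZeroRingHom.comp (Int.castRingHom (ZMod p))
            : ℤ →+* LaurentPolynomial (ZMod p)) : ℤ →+ LaurentPolynomial (ZMod p))
          (⇑(AddMonoidAlgebra.of (ZMod p) ℤ)) (AddMonoidAlgebra.single u c) := rfl
  rw [h0, AddMonoidAlgebra.liftNC_single]
  simp [AddMonoidAlgebra.singleZeroRingHom, AddMonoidAlgebra.of_apply,
    AddMonoidAlgebra.single_mul_single]

lemma phiAux_apply (p : ℕ) (Q : LaurentPolynomial ℤ) (v : ℤ) :
    (phiAux p Q).coeff v = ((Q.coeff v : ℤ) : ZMod p) := by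
  induction Q using AddMonoidAlgebra.induction_linear with
  | zero => simp
  | add f g hf hg =>
      rw [map_add]
      rw [AddMonoidAlgebra.coeff_add, AddMonoidAlgebra.coeff_add, Finsupp.add_apply, Finsupp.add_apply]
      rw [hf, hg]
      simp
  | single u c =>
      rw [phiAux_single]
      simp only [AddMonoidAlgebra.coeff_single, Finsupp.single_apply]
      split <;> simp

instance laurentCharP (p : ℕ) : CharP (LaurentPolynomial (ZMod p)) p :=
  charP_of_injective_ringHom (R := ZMod p)
    (f := AddMonoidAlgebra.singleZeroRingHom)
    (fun x y h => by
      simpa using AddMonoidAlgebra.single_right_injective (m := (0 : ℤ)) h) p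

lemma pow_p_eq (p : ℕ) [Fact p.Prime] (Q : LaurentPolynomial (ZMod p)) :
    Q ^ p = AddMonoidAlgebra.mapDomain (fun v => (p : ℤ) * v) Q := by
  have main : ∀ R : LaurentPolynomial (ZMod p),
      frobenius (LaurentPolynomial (ZMod p)) p R = AddMonoidAlgebra.mapDomain (fun v => (p : ℤ) * v) R := by
    intro R
    induction R using AddMonoidAlgebra.induction_linear with
    | zero => simp
    | add f g hf hg => rw [map_add, AddMonoidAlgebra.mapDomain_add, hf, hg]
    | single u c =>
        rw [frobenius_def, AddMonoidAlgebra.mapDomain_single]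
        rw [AddMonoidAlgebra.single_pow, ZMod.pow_card, nsmul_eq_mul]
  rw [show Q ^ p = frobenius (LaurentPolynomial (ZMod p)) p Q from rfl, main]

lemma supp_pow_bound {R : Type*} [CommRing R] (Q : LaurentPolynomial R) (a b : ℕ)
    (h : ∀ v ∈ Q.coeff.support, -(a : ℤ) ≤ v ∧ v ≤ (b : ℤ)) (k : ℕ) :
    ∀ v ∈ (Q ^ k).coeff.support, -((a * k : ℕ) : ℤ) ≤ v ∧ v ≤ ((b * k : ℕ) : ℤ) := by
  induction k with
  | zero =>
      intro v hv
      have h1 : (Q ^ 0 : LaurentPolynomial R) = AddMonoidAlgebra.single 0 1 := by rw [pow_zero]; rfl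
      rw [h1] at hv
      have := Finsupp.support_single_subset hv
      simp only [Finset.mem_singleton] at this
      subst this
      simp
  | succ k ih =>
      intro v hv
      rw [pow_succ] at hv
      have := AddMonoidAlgebra.support_coeff_mul_subset _ _ hv
      rw [Finset.mem_add] at this
      obtain ⟨u, hu, w, hw, rfl⟩ := this
      obtain ⟨h1, h2⟩ := ih u hu
      obtain ⟨h3, h4⟩ := h w hw
      constructor <;> push_cast at * <;> nlinarith

theorem stmt_9 (p : ℕ) (hp : p.Prime) (P : LaurentPolynomial ℤ) (a b : ℕ)
    (hsupp : ∀ v ∈ P.coeff.support, -(a : ℤ) ≤ v ∧ v ≤ (b : ℤ))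
    (k : ℕ) (hak : a * k < p) (hbk : b * k < p) (n : ℕ) :
    (P ^ (p * n + k)).coeff 0 ≡ (P ^ n).coeff 0 * (P ^ k).coeff 0 [ZMOD (p : ℤ)] := by
  haveI : Fact p.Prime := ⟨hp⟩
  rw [show ((p : ℤ)) = ((p : ℕ) : ℤ) from rfl]
  rw [← ZMod.intCast_eq_intCast_iff]
  push_cast
  rw [← phiAux_apply, ← phiAux_apply, ← phiAux_apply]
  set Q : LaurentPolynomial (ZMod p) := phiAux p P with hQ
  rw [map_pow, map_pow, map_pow]
  -- support of Q is contained in that of P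
  have hQsupp : ∀ v ∈ Q.coeff.support, -(a : ℤ) ≤ v ∧ v ≤ (b : ℤ) := by
    intro v hv
    apply hsupp
    rw [Finsupp.mem_support_iff] at hv ⊢
    intro h0
    rw [hQ, phiAux_apply, h0] at hv
    simp at hv
  have hQk := supp_pow_bound Q a b hQsupp k
  -- rewrite the big power
  have key : Q ^ (p * n + k) = ((Q ^ n) ^ p) * Q ^ k := by
    rw [← pow_mul', ← pow_add]
  rw [key]
  classical
  rw [AddMonoidAlgebra.coeff_mul]
  set A : LaurentPolynomial (ZMod p) := (Q ^ n) ^ p with hA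
  have hA2 : A = AddMonoidAlgebra.mapDomain (fun v => (p : ℤ) * v) (Q ^ n) := pow_p_eq p (Q ^ n)
  set B := Q ^ k with hB
  have inner : ∀ u c, (B.coeff.sum fun w d => if u + w = 0 then c * d else 0) = c * B.coeff (-u) := by
    intro u c
    rw [show (fun w d => if u + w = 0 then c * d else 0)
        = fun w d => if w = -u then c * d else 0 by
      funext w d; congr 1; simp [eq_comm]; omega]
    rw [Finsupp.sum_ite_eq' B.coeff (-u) (fun _ d => c * d)]
    split
    · rfl
    · next h => rw [Finsupp.notMem_support_iff.mp h, mul_zero]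
  rw [show (A.coeff.sum fun u c => B.coeff.sum fun w d => if u + w = 0 then c * d else 0)
      = A.coeff.sum fun u c => c * B.coeff (-u) from Finsupp.sum_congr fun u _ => inner u (A.coeff u)]
  -- the sum has only the u = 0 term
  have hvanish : ∀ u ∈ A.coeff.support, u ≠ 0 → A.coeff u * B.coeff (-u) = 0 := by
    intro u hu hu0
    rw [hA2] at hu
    have hmem : u ∈ (Q ^ n).coeff.support.image (fun v => (p : ℤ) * v) :=
      Finsupp.mapDomain_support hu
    rw [Finset.mem_image] at hmem
    obtain ⟨m, _, rfl⟩ := hmem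
    have hm : m ≠ 0 := by rintro rfl; simp at hu0
    have hp1 : (1 : ℤ) ≤ |m| := by
      rcases lt_trichotomy m 0 with h | h | h
      · rw [abs_of_neg h]; omega
      · exact absurd h hm
      · rw [abs_of_pos h]; omega
    have hBz : B.coeff (-((p : ℤ) * m)) = 0 := by
      rw [← Finsupp.notMem_support_iff]
      intro hmem2
      obtain ⟨hl, hr⟩ := hQk _ hmem2
      have hpp : (0 : ℤ) < p := by exact_mod_cast hp.pos
      rcases lt_trichotomy m 0 with h | h | h
      · have : (p : ℤ) ≤ -((p:ℤ) * m) := by nlinarith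
        have : ((b * k : ℕ) : ℤ) < p := by exact_mod_cast hbk
        omega
      · exact hm h
      · have : -((p:ℤ) * m) ≤ -(p : ℤ) := by nlinarith
        have : ((a * k : ℕ) : ℤ) < p := by exact_mod_cast hak
        omega
    rw [hBz, mul_zero]
  have hsum : (A.coeff.sum fun u c => c * B.coeff (-u)) = A.coeff 0 * B.coeff 0 := by
    rw [Finsupp.sum]
    by_cases h0 : (0 : ℤ) ∈ A.coeff.support
    · rw [← Finset.add_sum_erase _ _ h0]
      rw [Finset.sum_eq_zero (fun u hu => by
        rw [Finset.mem_erase] at hu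
        exact hvanish u hu.2 hu.1)]
      simp
    · rw [Finset.sum_eq_zero (fun u hu => by
        rcases eq_or_ne u 0 with rfl | hne
        · exact absurd hu h0
        · exact hvanish u hu hne)]
      rw [Finsupp.notMem_support_iff.mp h0, zero_mul]
  have hA0 : A.coeff 0 = (Q ^ n).coeff 0 := by
    rw [hA2]
    have hinj : Function.Injective (fun v : ℤ => (p : ℤ) * v) := fun x y h => by
      have hpp : (p : ℤ) ≠ 0 := by exact_mod_cast hp.ne_zero
      exact mul_left_cancel₀ hpp h
    have h3 := Finsupp.mapDomain_apply hinj (Q ^ n).coeff 0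
    simpa [AddMonoidAlgebra.mapDomain] using h3
  rw [hsum, hA0]
end

section
/- For all n ≥ 0, ∑_{k=0}^n C(n,k) C(n+k,k) C(n+2k,k) equals the constant term of P(x,y)^n where P(x,y) = (1+x)(1+y)(1 + ((1+x)/x)((1+y)^2/y)). -/
/-- The two-variable Laurent polynomial ring ℤ[x^{±1}, y^{±1}]. -/
abbrev Laurent2 := AddMonoidAlgebra ℤ (ℤ × ℤ)
noncomputable def X : Laurent2 := AddMonoidAlgebra.single (1, 0) 1
noncomputable def Y : Laurent2 := AddMonoidAlgebra.single (0, 1) 1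
noncomputable def Xinv : Laurent2 := AddMonoidAlgebra.single (-1, 0) 1
noncomputable def Yinv : Laurent2 := AddMonoidAlgebra.single (0, -1) 1
noncomputable def E (p : ℤ × ℤ) : Laurent2 := AddMonoidAlgebra.single p 1

lemma E_mul (p q : ℤ × ℤ) : E p * E q = E (p + q) := by
  simp [E, AddMonoidAlgebra.single_mul_single]

lemma E_zero : E 0 = 1 := rfl

lemma E_pow (p : ℤ × ℤ) (k : ℕ) : E p ^ k = E (k • p) := by
  induction k with
  | zero => simp [E_zero]
  | succ m ih => rw [pow_succ, ih, E_mul, succ_nsmul]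

lemma one_add_pow (p : ℤ × ℤ) (a : ℕ) :
    (1 + E p) ^ a = ∑ i ∈ Finset.range (a + 1), (a.choose i : Laurent2) * E (i • p) := by
  rw [add_comm, add_pow]
  refine Finset.sum_congr rfl fun i hi => ?_
  rw [E_pow, one_pow, mul_one, mul_comm]

lemma cast_mul_E (c : ℕ) (p : ℤ × ℤ) :
    (c : Laurent2) * E p = AddMonoidAlgebra.single p (c : ℤ) := by
  rw [AddMonoidAlgebra.natCast_def, E, AddMonoidAlgebra.single_mul_single]
  simp

lemma key (n : ℕ) :
    (((1 + X) * (1 + Y) * (1 + (1 + X) * Xinv * (1 + Y) ^ 2 * Yinv)) ^ n : Laurent2) =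
    ∑ k ∈ Finset.range (n+1), ∑ i ∈ Finset.range (n+k+1), ∑ j ∈ Finset.range (n+2*k+1),
      AddMonoidAlgebra.single ((i : ℤ) - k, (j : ℤ) - k)
        ((n.choose k : ℤ) * ((n+k).choose i) * ((n+2*k).choose j)) := by
  have hX : X = E (1,0) := rfl
  have hY : Y = E (0,1) := rfl
  have hXi : Xinv = E (-1,0) := rfl
  have hYi : Yinv = E (0,-1) := rfl
  rw [mul_pow, mul_pow]
  rw [add_comm (1 : Laurent2) ((1 + X) * Xinv * (1 + Y) ^ 2 * Yinv), add_pow ((1 + X) * Xinv * (1 + Y) ^ 2 * Yinv) 1 n]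
  rw [Finset.mul_sum]
  refine Finset.sum_congr rfl fun k hk => ?_
  have hAk : ((1 + X) * Xinv * (1 + Y) ^ 2 * Yinv) ^ k
      = (1+X)^k * (1+Y)^(2*k) * E (-(k:ℤ), -(k:ℤ)) := by
    rw [mul_pow, mul_pow, mul_pow, ← pow_mul, hXi, hYi, E_pow, E_pow]
    have : ((k • ((-1 : ℤ),(0:ℤ)))) + (k • ((0:ℤ),(-1:ℤ))) = (-(k:ℤ), -(k:ℤ)) := by
      simp [Prod.ext_iff]
    rw [mul_comm ((1+X)^k * E (k • (-1,0))) ((1+Y)^(2*k)), mul_assoc, mul_assoc, mul_assoc,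
      E_mul, this]
    ring
  rw [hAk, one_pow, mul_one]
  have step : (1 + X)^n * (1 + Y)^n * ((1+X)^k * (1+Y)^(2*k) * E (-(k:ℤ), -(k:ℤ)) * (n.choose k : Laurent2))
      = (n.choose k : Laurent2) * ((1+X)^(n+k) * ((1+Y)^(n+2*k) * E (-(k:ℤ), -(k:ℤ)))) := by
    rw [pow_add, pow_add]; ring
  rw [step, hX, hY, one_add_pow, one_add_pow, Finset.sum_mul, Finset.mul_sum]
  refine Finset.sum_congr rfl fun i hi => ?_
  rw [Finset.sum_mul, Finset.mul_sum, Finset.mul_sum]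
  refine Finset.sum_congr rfl fun j hj => ?_
  have hE : E (i • ((1:ℤ),(0:ℤ))) * (E (j • ((0:ℤ),(1:ℤ))) * E (-(k:ℤ), -(k:ℤ)))
      = E ((i:ℤ)-(k:ℤ), (j:ℤ)-(k:ℤ)) := by
    rw [E_mul, E_mul]
    congr 1
    simp only [smul_eq_mul, Prod.smul_mk, Prod.mk_add_mk, Prod.ext_iff]
    constructor <;> ring
  calc ((n.choose k : Laurent2)) * (((n + k).choose i : Laurent2) * E (i • (1, 0)) *
        (((n + 2 * k).choose j : Laurent2) * E (j • (0, 1)) * E (-(k:ℤ), -(k:ℤ))))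
      = ((n.choose k * ((n + k).choose i) * ((n + 2 * k).choose j) : ℕ) : Laurent2) *
        (E (i • ((1:ℤ),(0:ℤ))) * (E (j • ((0:ℤ),(1:ℤ))) * E (-(k:ℤ), -(k:ℤ)))) := by
        push_cast; ring
    _ = AddMonoidAlgebra.single ((i : ℤ) - k, (j : ℤ) - k)
        ((n.choose k : ℤ) * ((n+k).choose i) * ((n+2*k).choose j)) := by
        rw [hE, cast_mul_E]; push_cast; ring_nf

theorem stmt_13 (n : ℕ) :
    (∑ k ∈ Finset.range (n + 1),
        ((n.choose k : ℤ) * ((n + k).choose k) * ((n + 2 * k).choose k))) =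
      (((1 + X) * (1 + Y) * (1 + (1 + X) * Xinv * (1 + Y) ^ 2 * Yinv)) ^ n : Laurent2).coeff (0, 0) := by
  rw [key]
  simp only [AddMonoidAlgebra.coeff_sum, AddMonoidAlgebra.coeff_single]
  rw [Finset.sum_apply']
  refine Finset.sum_congr rfl fun k hk => ?_
  rw [Finset.sum_apply']
  have h1 : ∀ i j : ℕ, (((i:ℤ)-k, (j:ℤ)-k) = ((0:ℤ),(0:ℤ))) ↔ (i = k ∧ j = k) := by
    intro i j
    simp [Prod.ext_iff, sub_eq_zero]
  calc ((n.choose k : ℤ) * ((n + k).choose k) * ((n + 2 * k).choose k))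
      = ∑ i ∈ Finset.range (n+k+1), if i = k then
          ∑ j ∈ Finset.range (n+2*k+1), if j = k then
            ((n.choose k : ℤ) * ((n + k).choose i) * ((n + 2 * k).choose j)) else 0 else 0 := by
        rw [Finset.sum_ite_eq' (Finset.range (n+k+1)) k]
        simp only [Finset.mem_range]
        rw [if_pos (by omega)]
        rw [Finset.sum_ite_eq' (Finset.range (n+2*k+1)) k]
        simp only [Finset.mem_range]
        rw [if_pos (by omega)]
    _ = _ := by
        refine Finset.sum_congr rfl fun i hi => ?_
        rw [Finset.sum_apply']
        by_cases hik : i = k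
        · rw [if_pos hik]
          refine Finset.sum_congr rfl fun j hj => ?_
          rw [Finsupp.single_apply]
          by_cases hjk : j = k
          · rw [if_pos hjk, if_pos ((h1 i j).mpr ⟨hik, hjk⟩)]
          · rw [if_neg hjk, if_neg (fun h => hjk (((h1 i j).mp h).2))]
        · rw [if_neg hik]
          symm
          refine Finset.sum_eq_zero fun j hj => ?_
          rw [Finsupp.single_apply, if_neg (fun h => hik (((h1 i j).mp h).1))]
end

section
/- For all n ≥ 0, ∑_{k=0}^n C(n,k) C(n+k,k) C(n+2k,k) equals the constant term of Q(x,y)^n where Q(x,y) = (1+x+y)(1 + (1+x+y)^2/(xy)). -/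
open Finset AddMonoidAlgebra

lemma X_pow (i : ℕ) : (X : Laurent2) ^ i = AddMonoidAlgebra.single ((i:ℤ), 0) 1 := by
  simp [X, AddMonoidAlgebra.single_pow, Prod.smul_def]

lemma Y_pow (i : ℕ) : (Y : Laurent2) ^ i = AddMonoidAlgebra.single (0, (i:ℤ)) 1 := by
  simp [Y, AddMonoidAlgebra.single_pow, Prod.smul_def]

lemma P_expand (m : ℕ) : ((1 + X + Y)^m : Laurent2) =
    ∑ j ∈ range (m+1), ∑ i ∈ range (j+1),
      AddMonoidAlgebra.single ((i:ℤ), ((m-j:ℕ):ℤ)) ((j.choose i : ℤ) * (m.choose j)) := by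
  have hxy : (1 + X + Y : Laurent2) = (X + 1) + Y := by ring
  rw [hxy, add_pow]
  refine Finset.sum_congr rfl fun j hj => ?_
  rw [add_pow, Finset.sum_mul, Finset.sum_mul]
  refine Finset.sum_congr rfl fun i hi => ?_
  simp only [one_pow, mul_one, X_pow, Y_pow, AddMonoidAlgebra.natCast_def,
    AddMonoidAlgebra.single_mul_single]
  congr 1
  · simp [Prod.ext_iff]
  · ring

lemma coeff_P (m k : ℕ) (hk : 2*k ≤ m) :
    ((1 + X + Y)^m : Laurent2).coeff ((k:ℤ), (k:ℤ)) = (m.choose k : ℤ) * ((m-k).choose k) := by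
  rw [P_expand, AddMonoidAlgebra.coeff_sum, Finsupp.finset_sum_apply, Finset.sum_eq_single (m - k)]
  · rw [AddMonoidAlgebra.coeff_sum, Finsupp.finset_sum_apply, Finset.sum_eq_single k]
    · rw [AddMonoidAlgebra.coeff_single, Finsupp.single_apply, if_pos]
      · rw [Nat.choose_symm (by omega : k ≤ m)]; ring
      · simp [Nat.sub_sub_self (by omega : k ≤ m)]
    · intro i _ hik
      rw [AddMonoidAlgebra.coeff_single, Finsupp.single_apply, if_neg]
      simp only [Prod.mk.injEq, Nat.cast_inj]
      tauto
    · intro h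
      exact absurd (Finset.mem_range.2 (by omega)) h
  · intro j hj hjk
    rw [AddMonoidAlgebra.coeff_sum, Finsupp.finset_sum_apply]
    refine Finset.sum_eq_zero fun i hi => ?_
    rw [AddMonoidAlgebra.coeff_single, Finsupp.single_apply, if_neg]
    simp only [Prod.mk.injEq, Nat.cast_inj]
    rintro ⟨rfl, h2⟩
    have hj' := Finset.mem_range.1 hj
    exact hjk (by omega)
  · intro h
    exact absurd (Finset.mem_range.2 (by omega)) h

theorem stmt_14 (n : ℕ) :
    (∑ k ∈ Finset.range (n + 1),
        ((n.choose k : ℤ) * ((n + k).choose k) * ((n + 2 * k).choose k))) =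
      (((1 + X + Y) * (1 + (1 + X + Y) ^ 2 * Xinv * Yinv)) ^ n : Laurent2).coeff (0, 0) := by
  have hW : (Xinv * Yinv : Laurent2) = AddMonoidAlgebra.single ((-1:ℤ), (-1:ℤ)) 1 := by
    simp [Xinv, Yinv, AddMonoidAlgebra.single_mul_single]
  have hexp : (((1 + X + Y) * (1 + (1 + X + Y) ^ 2 * Xinv * Yinv)) ^ n : Laurent2) =
      ∑ k ∈ range (n+1), (1 + X + Y)^(n + 2*k) *
        AddMonoidAlgebra.single ((-(k:ℤ)), (-(k:ℤ))) ((n.choose k : ℤ)) := by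
    rw [mul_pow, show (1 + (1+X+Y)^2*Xinv*Yinv : Laurent2) = (1+X+Y)^2*Xinv*Yinv + 1 from by ring,
      add_pow ((1+X+Y)^2*Xinv*Yinv) 1 n, Finset.mul_sum]
    refine Finset.sum_congr rfl fun k hk => ?_
    rw [one_pow, mul_one, mul_assoc ((1+X+Y:Laurent2)^2) Xinv Yinv, mul_pow, hW,
      AddMonoidAlgebra.single_pow, one_pow, AddMonoidAlgebra.natCast_def, ← pow_mul,
      mul_assoc, AddMonoidAlgebra.single_mul_single, ← mul_assoc, ← pow_add]
    congr 2
    · simp [Prod.smul_def]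
    · simp
  rw [hexp, AddMonoidAlgebra.coeff_sum, Finsupp.finset_sum_apply]
  refine Finset.sum_congr rfl fun k hk => ?_
  rw [AddMonoidAlgebra.coeff_mul_single_apply]
  have h00 : ((0,0) : ℤ × ℤ) - (-(k:ℤ), -(k:ℤ)) = ((k:ℤ), (k:ℤ)) := by
    simp [Prod.ext_iff]
  rw [← sub_eq_add_neg, h00, coeff_P (n + 2*k) k (by omega)]
  have : n + 2*k - k = n + k := by omega
  rw [this]; ring
end

section
/- Let p be a prime and C(n) = ∑_{k=0}^n C(n,k) C(n+k,k) C(n+2k,k). Then for all n, k ≥ 0 with k < p, C(pn + k) ≡ C(n) C(k) (mod p). -/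
def C (n : ℕ) : ℤ :=
  ∑ j ∈ Finset.range (n + 1), (n.choose j : ℤ) * ((n + j).choose j) * ((n + 2 * j).choose j)

section Aux
variable {p : ℕ} [hp : Fact p.Prime]

private lemma lucas' (a b c d : ℕ) (hb : b < p) (hd : d < p) :
    (((p * a + b).choose (p * c + d) : ℕ) : ZMod p) = (a.choose c : ZMod p) * (b.choose d : ZMod p) := by
  have hpos : 0 < p := hp.out.pos
  have h := @Choose.choose_modEq_choose_mod_mul_choose_div (p * a + b) (p * c + d) p _
  rw [Nat.mul_add_mod, Nat.mod_eq_of_lt hb, Nat.mul_add_mod, Nat.mod_eq_of_lt hd,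
      Nat.mul_add_div hpos, Nat.div_eq_of_lt hb, Nat.mul_add_div hpos, Nat.div_eq_of_lt hd,
      Nat.add_zero, Nat.add_zero] at h
  have h2 := (ZMod.intCast_eq_intCast_iff _ _ p).mpr h
  push_cast at h2
  rw [h2, mul_comm]

private lemma vanish (x y : ℕ) (hy : y < p) (hxy : x % p < y) :
    ((x.choose y : ℕ) : ZMod p) = 0 := by
  have hx : x = p * (x / p) + x % p := by rw [Nat.div_add_mod]
  have hy' : y = p * 0 + y := by ring
  rw [hx, hy', lucas' (x / p) (x % p) 0 y (Nat.mod_lt _ hp.out.pos) hy,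
      Nat.choose_eq_zero_of_lt hxy]
  simp

omit hp in private lemma modcalc (x : ℕ) (h1 : p ≤ x) (h2 : x < 2 * p) : x % p = x - p := by
  rw [Nat.mod_eq_sub_mod h1, Nat.mod_eq_of_lt (by omega)]

/-- the summand, in `ZMod p` -/
noncomputable def Tz (p m j : ℕ) : ZMod p :=
  (m.choose j : ZMod p) * ((m + j).choose j : ZMod p) * ((m + 2 * j).choose j : ZMod p)

private lemma Tz_zero (k b : ℕ) (hk : k < p) (hb : b < p) (h : p ≤ k + 2 * b) :
    Tz p k b = 0 := by
  unfold Tz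
  by_cases h1 : p ≤ k + b
  · rw [vanish (k + b) b hb (by rw [modcalc _ h1 (by omega)]; omega)]
    ring
  · rw [vanish (k + 2 * b) b hb (by rw [modcalc _ h (by omega)]; omega)]
    ring

private lemma key_s15 (n k a b : ℕ) (hk : k < p) (hb : b < p) :
    Tz p (p * n + k) (p * a + b) = Tz p n a * (if p ≤ k + 2 * b then 0 else Tz p k b) := by
  unfold Tz
  have h1 : (((p * n + k).choose (p * a + b) : ℕ) : ZMod p)
      = (n.choose a : ZMod p) * (k.choose b : ZMod p) := lucas' n k a b hk hb
  by_cases hc1 : k + b < p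
  · have e2 : p * n + k + (p * a + b) = p * (n + a) + (k + b) := by ring
    have h2 : (((p * n + k + (p * a + b)).choose (p * a + b) : ℕ) : ZMod p)
        = ((n + a).choose a : ZMod p) * ((k + b).choose b : ZMod p) := by
      rw [e2]; exact lucas' (n + a) (k + b) a b hc1 hb
    by_cases hc2 : k + 2 * b < p
    · have e3 : p * n + k + 2 * (p * a + b) = p * (n + 2 * a) + (k + 2 * b) := by ring
      have h3 : (((p * n + k + 2 * (p * a + b)).choose (p * a + b) : ℕ) : ZMod p)
          = ((n + 2 * a).choose a : ZMod p) * ((k + 2 * b).choose b : ZMod p) := by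
        rw [e3]; exact lucas' (n + 2 * a) (k + 2 * b) a b hc2 hb
      rw [h1, h2, h3, if_neg (by omega)]
      ring
    · have hle3 : p ≤ k + 2 * b := le_of_not_gt hc2
      have e3 : p * n + k + 2 * (p * a + b) = p * (n + 2 * a + 1) + (k + 2 * b - p) := by
        zify [hle3]; ring
      have h3 : (((p * n + k + 2 * (p * a + b)).choose (p * a + b) : ℕ) : ZMod p)
          = ((n + 2 * a + 1).choose a : ZMod p) * ((k + 2 * b - p).choose b : ZMod p) := by
        rw [e3]; exact lucas' (n + 2 * a + 1) (k + 2 * b - p) a b (by omega) hb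
      rw [h3, Nat.choose_eq_zero_of_lt (show k + 2 * b - p < b by omega), if_pos (by omega)]
      push_cast
      ring
  · have hle2 : p ≤ k + b := le_of_not_gt hc1
    have e2 : p * n + k + (p * a + b) = p * (n + a + 1) + (k + b - p) := by
      zify [hle2]; ring
    have h2 : (((p * n + k + (p * a + b)).choose (p * a + b) : ℕ) : ZMod p)
        = ((n + a + 1).choose a : ZMod p) * ((k + b - p).choose b : ZMod p) := by
      rw [e2]; exact lucas' (n + a + 1) (k + b - p) a b (by omega) hb
    rw [h2, Nat.choose_eq_zero_of_lt (show k + b - p < b by omega), if_pos (by omega)]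
    push_cast
    ring

private lemma C_cast (m : ℕ) : ((C m : ℤ) : ZMod p) = ∑ j ∈ Finset.range (m + 1), Tz p m j := by
  unfold C Tz
  push_cast
  rfl

end Aux

theorem stmt_15 (p : ℕ) (hp : p.Prime) (n k : ℕ) (hk : k < p) :
    C (p * n + k) ≡ C n * C k [ZMOD (p : ℤ)] := by
  haveI : Fact p.Prime := ⟨hp⟩
  have hpos : 0 < p := hp.pos
  rw [← ZMod.intCast_eq_intCast_iff]
  push_cast [C_cast]
  -- goal : ∑ j in range (p*n+k+1), Tz p (p*n+k) j = (∑ Tz p n) * (∑ Tz p k)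
  set m := p * n + k with hm
  have step1 : ∑ j ∈ Finset.range (m + 1), Tz p m j
      = ∑ j ∈ Finset.range (p * (n + 1)), Tz p m j := by
    apply Finset.sum_subset (Finset.range_subset_range.mpr (by rw [hm, Nat.mul_add, Nat.mul_one]; omega))
    intro j hj hj'
    simp only [Finset.mem_range] at hj hj'
    unfold Tz
    rw [Nat.choose_eq_zero_of_lt (by omega)]
    push_cast
    ring
  have step2 : ∑ j ∈ Finset.range (p * (n + 1)), Tz p m j
      = ∑ x ∈ Finset.range (n + 1) ×ˢ Finset.range p, Tz p m (p * x.1 + x.2) := by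
    apply Finset.sum_nbij' (fun j => (j / p, j % p)) (fun x => p * x.1 + x.2)
    · intro j hj
      simp only [Finset.mem_range] at hj
      simp only [Finset.mem_product, Finset.mem_range]
      exact ⟨Nat.div_lt_of_lt_mul (by omega), Nat.mod_lt _ hpos⟩
    · intro x hx
      simp only [Finset.mem_product, Finset.mem_range] at hx
      simp only [Finset.mem_range]
      calc p * x.1 + x.2 < p * x.1 + p := by omega
        _ ≤ p * (n + 1) := by nlinarith [hx.1]
    · intro j hj
      simp [Nat.div_add_mod]
    · intro x hx
      simp only [Finset.mem_product, Finset.mem_range] at hx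
      have : (p * x.1 + x.2) / p = x.1 := by
        rw [Nat.mul_add_div hpos, Nat.div_eq_of_lt hx.2, Nat.add_zero]
      have h2 : (p * x.1 + x.2) % p = x.2 := by
        rw [Nat.mul_add_mod, Nat.mod_eq_of_lt hx.2]
      simp [this, h2]
    · intro j hj
      rw [Nat.div_add_mod]
  rw [step1, step2]
  have step3 : ∑ x ∈ Finset.range (n + 1) ×ˢ Finset.range p, Tz p m (p * x.1 + x.2)
      = ∑ a ∈ Finset.range (n + 1), ∑ b ∈ Finset.range p,
          Tz p n a * (if p ≤ k + 2 * b then 0 else Tz p k b) := by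
    rw [Finset.sum_product]
    exact Finset.sum_congr rfl fun a _ => Finset.sum_congr rfl fun b hb =>
      key_s15 n k a b hk (Finset.mem_range.mp hb)
  rw [step3, ← Finset.sum_mul_sum]
  congr 1
  have step4 : ∑ b ∈ Finset.range p, (if p ≤ k + 2 * b then 0 else Tz p k b)
      = ∑ b ∈ Finset.range p, Tz p k b := by
    apply Finset.sum_congr rfl
    intro b hb
    by_cases h : p ≤ k + 2 * b
    · rw [if_pos h, Tz_zero k b hk (Finset.mem_range.mp hb) h]
    · rw [if_neg h]
  rw [step4]
  symm
  apply Finset.sum_subset (Finset.range_subset_range.mpr (by omega))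
  intro b hb hb'
  simp only [Finset.mem_range] at hb hb'
  unfold Tz
  rw [Nat.choose_eq_zero_of_lt (by omega)]
  push_cast
  ring
end

section
/- Let p be a prime and A(n) = ∑_{k=0}^n C(n,k)^2 C(n+k,k)^2 the Apéry numbers. Then for all n, k ≥ 0 with k < p, A(pn + k) ≡ A(n) A(k) (mod p). -/
def A (n : ℕ) : ℤ :=
  ∑ j ∈ Finset.range (n + 1), (n.choose j : ℤ) ^ 2 * ((n + j).choose j) ^ 2

lemma lucasZMod (p : ℕ) [Fact p.Prime] (m j : ℕ) :
    ((m.choose j : ℕ) : ZMod p) =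
      (((m % p).choose (j % p) : ℕ) : ZMod p) * (((m / p).choose (j / p) : ℕ) : ZMod p) := by
  have h := Choose.choose_modEq_choose_mod_mul_choose_div (n := m) (k := j) (p := p)
  have h2 := (ZMod.intCast_eq_intCast_iff _ _ _).mpr h
  push_cast at h2 ⊢
  exact h2

theorem stmt_16 (p : ℕ) (hp : p.Prime) (n k : ℕ) (hk : k < p) :
    A (p * n + k) ≡ A n * A k [ZMOD (p : ℤ)] := by
  haveI : Fact p.Prime := ⟨hp⟩
  have hp0 : 0 < p := hp.pos
  rw [← ZMod.intCast_eq_intCast_iff]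
  -- reduce to ZMod p
  unfold A
  push_cast
  -- notation
  set F : ℕ → ZMod p := fun j =>
    (((p * n + k).choose j : ℕ) : ZMod p) ^ 2 * (((p * n + k + j).choose j : ℕ) : ZMod p) ^ 2
    with hF
  set G : ℕ → ZMod p := fun a =>
    ((n.choose a : ℕ) : ZMod p) ^ 2 * (((n + a).choose a : ℕ) : ZMod p) ^ 2 with hG
  set H : ℕ → ZMod p := fun b =>
    ((k.choose b : ℕ) : ZMod p) ^ 2 * (((k + b).choose b : ℕ) : ZMod p) ^ 2 with hH
  show ∑ j ∈ Finset.range (p * n + k + 1), F j =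
    (∑ a ∈ Finset.range (n + 1), G a) * ∑ b ∈ Finset.range (k + 1), H b
  -- extend LHS range
  have h1 : ∑ j ∈ Finset.range (p * n + k + 1), F j =
      ∑ j ∈ Finset.range (p * (n + 1)), F j := by
    apply Finset.sum_subset
    · apply Finset.range_subset_range.mpr
      have : p * (n + 1) = p * n + p := by ring
      omega
    · intro j _ hj
      simp only [Finset.mem_range, not_lt] at hj
      have : (p * n + k).choose j = 0 := Nat.choose_eq_zero_of_lt (by omega)
      simp [hF, this]
  -- extend RHS k-range
  have h2 : ∑ b ∈ Finset.range (k + 1), H b = ∑ b ∈ Finset.range p, H b := by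
    apply Finset.sum_subset
    · exact Finset.range_subset_range.mpr (by omega)
    · intro b _ hb
      simp only [Finset.mem_range, not_lt] at hb
      have : k.choose b = 0 := Nat.choose_eq_zero_of_lt (by omega)
      simp [hH, this]
  rw [h1, h2, Finset.sum_mul_sum]
  -- reindex LHS
  rw [show (∑ a ∈ Finset.range (n + 1), ∑ b ∈ Finset.range p, G a * H b) =
      ∑ x ∈ Finset.range (n + 1) ×ˢ Finset.range p, G x.1 * H x.2 by
    rw [Finset.sum_product]]
  apply Finset.sum_nbij' (fun j => (j / p, j % p)) (fun x => p * x.1 + x.2)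
  · intro j hj
    simp only [Finset.mem_range] at hj
    simp only [Finset.mem_product, Finset.mem_range]
    exact ⟨Nat.div_lt_of_lt_mul hj, Nat.mod_lt _ hp0⟩
  · intro x hx
    simp only [Finset.mem_product, Finset.mem_range] at hx
    simp only [Finset.mem_range]
    calc p * x.1 + x.2 < p * x.1 + p := by omega
      _ = p * (x.1 + 1) := by ring
      _ ≤ p * (n + 1) := Nat.mul_le_mul_left p (by omega)
  · intro j _; exact Nat.div_add_mod j p
  · intro x hx
    simp only [Finset.mem_product, Finset.mem_range] at hx
    simp [Nat.mul_add_div hp0, Nat.mul_add_mod, Nat.div_eq_of_lt hx.2, Nat.mod_eq_of_lt hx.2]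
  · intro j hj
    simp only [Finset.mem_range] at hj
    set a := j / p with ha
    set b := j % p with hb
    have hab : j = p * a + b := (Nat.div_add_mod j p).symm
    have hbp : b < p := Nat.mod_lt _ hp0
    have han : a ≤ n := by
      have := Nat.div_lt_of_lt_mul hj
      omega
    -- compute F j
    have e1 : (p * n + k) % p = k := by rw [Nat.mul_add_mod, Nat.mod_eq_of_lt hk]
    have e2 : (p * n + k) / p = n := by rw [Nat.mul_add_div hp0, Nat.div_eq_of_lt hk]; omega
    have e3 : j % p = b := hb.symm
    have e4 : j / p = a := ha.symm
    have e5 : p * n + k + j = p * (n + a) + (k + b) := by rw [hab]; ring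
    have l1 : (((p * n + k).choose j : ℕ) : ZMod p) =
        ((k.choose b : ℕ) : ZMod p) * ((n.choose a : ℕ) : ZMod p) := by
      rw [lucasZMod p, e1, e2, e3, e4]
    by_cases hkb : k + b < p
    · have e6 : (p * n + k + j) % p = k + b := by
        rw [e5, Nat.mul_add_mod, Nat.mod_eq_of_lt hkb]
      have e7 : (p * n + k + j) / p = n + a := by
        rw [e5, Nat.mul_add_div hp0, Nat.div_eq_of_lt hkb]; omega
      have l2 : (((p * n + k + j).choose j : ℕ) : ZMod p) =
          (((k + b).choose b : ℕ) : ZMod p) * (((n + a).choose a : ℕ) : ZMod p) := by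
        rw [lucasZMod p, e6, e7, e3, e4]
      simp only [hF, hG, hH, l1, l2]
      ring
    · -- k + b ≥ p : both sides vanish
      have hkb2 : k + b < 2 * p := by omega
      have e6 : (p * n + k + j) % p = k + b - p := by
        rw [e5, Nat.mul_add_mod, Nat.mod_eq_sub_mod (by omega), Nat.mod_eq_of_lt (by omega)]
      have hz1 : ((k + b - p).choose b) = 0 := Nat.choose_eq_zero_of_lt (by omega)
      have l2 : (((p * n + k + j).choose j : ℕ) : ZMod p) = 0 := by
        rw [lucasZMod p, e6, e3, hz1]; simp
      have l3 : (((k + b).choose b : ℕ) : ZMod p) = 0 := by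
        rw [lucasZMod p (k + b) b, Nat.mod_eq_sub_mod (by omega : p ≤ k + b),
          Nat.mod_eq_of_lt (by omega), Nat.mod_eq_of_lt hbp, hz1]
        simp
      simp only [hF, hG, hH, l2, l3]
      ring
end

section
/- Let p be a prime with p ≥ 5, and let ε, a, b be integers with a ≥ 1, b ≥ 0 and (ε, a, b) ≢ (0,0,1), (0,1,0) in the sense that (a,b) ≠ (0,1) and (a,b) ≠ (1,0) when ε is even. Then ∑_{k=0}^p (-1)^{εk} C(p,k)^a C(2p,k)^b ≡ 1 + (-1)^ε 2^b (mod p^3). -/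
open Finset

namespace W19

variable {p : ℕ} [Fact p.Prime]

lemma sum_univ_sq (hp5 : 5 ≤ p) : ∑ x : ZMod p, x ^ 2 = 0 := by
  apply FiniteField.sum_pow_lt_card_sub_one
  rw [ZMod.card]; omega

lemma sum_range_eq_sum_univ (f : ZMod p → ZMod p) :
    ∑ k ∈ range p, f (k : ZMod p) = ∑ x : ZMod p, f x := by
  refine Finset.sum_nbij' (fun k => (k : ZMod p)) (fun x => x.val) ?_ ?_ ?_ ?_ ?_
  · intro a _; exact mem_univ _
  · intro x _; exact mem_range.mpr (ZMod.val_lt x)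
  · intro a ha; exact ZMod.val_cast_of_lt (mem_range.mp ha)
  · intro x _; exact ZMod.natCast_rightInverse x
  · intro a _; rfl

lemma sum_sq_Ico (hp5 : 5 ≤ p) :
    ∑ k ∈ Ico 1 p, ((k : ZMod p)) ^ 2 = 0 := by
  have hpos : 0 < p := by omega
  have h0 : ∑ k ∈ Ico 0 p, ((k : ZMod p)) ^ 2 = ∑ k ∈ Ico 1 p, ((k : ZMod p)) ^ 2 := by
    rw [Finset.sum_eq_sum_Ico_succ_bot hpos]
    simp
  rw [← h0, ← range_eq_Ico, sum_range_eq_sum_univ (fun x => x ^ 2), sum_univ_sq hp5]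

end W19

namespace W19
open Finset
variable {p : ℕ} [Fact p.Prime]

lemma cast_ne_zero {k : ℕ} (hk : k ∈ Ico 1 p) : (k : ZMod p) ≠ 0 := by
  rw [Ne, ZMod.natCast_eq_zero_iff]
  rw [mem_Ico] at hk
  exact Nat.not_dvd_of_pos_of_lt (by omega) hk.2

lemma sum_inv_sq (hp5 : 5 ≤ p) : ∑ k ∈ Ico 1 p, ((k : ZMod p)⁻¹) ^ 2 = 0 := by
  have key : ∑ k ∈ Ico 1 p, ((k : ZMod p)⁻¹) ^ 2 = ∑ k ∈ Ico 1 p, ((k : ZMod p)) ^ 2 := by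
    refine Finset.sum_nbij' (fun k => ((k : ZMod p)⁻¹).val) (fun k => ((k : ZMod p)⁻¹).val)
      ?_ ?_ ?_ ?_ ?_
    · intro a ha
      rw [mem_Ico]
      refine ⟨Nat.one_le_iff_ne_zero.mpr ?_, ZMod.val_lt _⟩
      rw [Ne, ZMod.val_eq_zero]
      exact inv_ne_zero (cast_ne_zero ha)
    · intro a ha
      rw [mem_Ico]
      refine ⟨Nat.one_le_iff_ne_zero.mpr ?_, ZMod.val_lt _⟩
      rw [Ne, ZMod.val_eq_zero]
      exact inv_ne_zero (cast_ne_zero ha)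
    · intro a ha
      show ((((a : ZMod p)⁻¹).val : ZMod p)⁻¹).val = a
      rw [ZMod.natCast_rightInverse _, inv_inv]
      exact ZMod.val_cast_of_lt (mem_Ico.mp ha).2
    · intro a ha
      show ((((a : ZMod p)⁻¹).val : ZMod p)⁻¹).val = a
      rw [ZMod.natCast_rightInverse _, inv_inv]
      exact ZMod.val_cast_of_lt (mem_Ico.mp ha).2
    · intro a _
      show ((a : ZMod p)⁻¹) ^ 2 = (((((a : ZMod p)⁻¹).val : ℕ) : ZMod p)) ^ 2
      rw [ZMod.natCast_rightInverse _]
  rw [key, sum_sq_Ico hp5]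

end W19

namespace W19
open Finset
variable {p : ℕ} [Fact p.Prime]

lemma sum_reflect {M : Type*} [AddCommMonoid M] {p : ℕ} (f : ℕ → M) :
    ∑ k ∈ Ico 1 p, f k = ∑ k ∈ Ico 1 p, f (p - k) := by
  refine Finset.sum_nbij' (fun k => p - k) (fun k => p - k) ?_ ?_ ?_ ?_ ?_ <;>
    intro a ha <;> simp only [mem_Ico] at ha ⊢
  · omega
  · omega
  · omega
  · omega
  · congr 1; omega

lemma two_ne_zero' (hp5 : 5 ≤ p) : (2 : ZMod p) ≠ 0 := by
  have : ((2 : ℕ) : ZMod p) ≠ 0 := by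
    rw [Ne, ZMod.natCast_eq_zero_iff]
    intro h
    have := Nat.le_of_dvd (by norm_num) h
    omega
  simpa using this

lemma sum_sign_inv_sq (hp5 : 5 ≤ p) {w : ZMod p} (hw : w = 1 ∨ w = -1) :
    ∑ k ∈ Ico 1 p, w ^ k * ((k : ZMod p)⁻¹) ^ 2 = 0 := by
  have hp := (Fact.out : p.Prime)
  rcases hw with rfl | rfl
  · simp only [one_pow, one_mul]; exact sum_inv_sq hp5
  · have hodd : Odd p := hp.odd_of_ne_two (by omega)
    set S := ∑ k ∈ Ico 1 p, (-1 : ZMod p) ^ k * ((k : ZMod p)⁻¹) ^ 2 with hS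
    have h1 : S = ∑ k ∈ Ico 1 p, (-1) ^ (p - k) * (((p - k : ℕ) : ZMod p)⁻¹) ^ 2 :=
      sum_reflect _
    have h2 : ∀ k ∈ Ico 1 p, (-1 : ZMod p) ^ (p - k) * (((p - k : ℕ) : ZMod p)⁻¹) ^ 2
        = -((-1) ^ k * ((k : ZMod p)⁻¹) ^ 2) := by
      intro k hk
      rw [mem_Ico] at hk
      have hcast : ((p - k : ℕ) : ZMod p) = -(k : ZMod p) := by
        rw [Nat.cast_sub (le_of_lt hk.2), ZMod.natCast_self, zero_sub]
      have hone : ((-1 : ZMod p) ^ k) * ((-1) ^ k) = 1 := by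
        rw [← mul_pow]; norm_num
      have hsgn : (-1 : ZMod p) ^ (p - k) = -(-1) ^ k := by
        calc (-1 : ZMod p) ^ (p - k) = (-1) ^ (p - k) * (((-1) ^ k) * ((-1) ^ k)) := by
              rw [hone, mul_one]
          _ = ((-1) ^ ((p - k) + k)) * (-1) ^ k := by rw [pow_add]; ring
          _ = ((-1) ^ p) * (-1) ^ k := by congr 2; omega
          _ = -(-1) ^ k := by rw [hodd.neg_one_pow]; ring
      rw [hsgn, hcast, inv_neg, neg_sq]
      ring
    have h3 : S = -S := by
      have := (Finset.sum_congr rfl h2).trans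
        (Finset.sum_neg_distrib (s := Ico 1 p) (f := fun k => (-1 : ZMod p) ^ k * ((k : ZMod p)⁻¹) ^ 2))
      exact h1.trans this
    have h4 : (2 : ZMod p) * S = 0 := by
      have : S + S = 0 := by nth_rewrite 1 [h3]; ring
      linear_combination this
    rcases mul_eq_zero.mp h4 with h | h
    · exact absurd h (two_ne_zero' hp5)
    · exact h

end W19

namespace W19
open Finset
variable {p : ℕ} [Fact p.Prime]

lemma pcube_zero : ((p : ZMod (p^3)))^3 = 0 := by
  have : ((p^3 : ℕ) : ZMod (p^3)) = 0 := ZMod.natCast_self _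
  push_cast at this
  exact this

lemma coprime_pow {k : ℕ} (hk : k ∈ Ico 1 p) : Nat.Coprime k (p^3) := by
  have hp := (Fact.out : p.Prime)
  rw [mem_Ico] at hk
  exact (Nat.Coprime.pow_right _ (((hp.coprime_iff_not_dvd).mpr
    (Nat.not_dvd_of_pos_of_lt (by omega) hk.2)).symm))

lemma unit_k {k : ℕ} (hk : k ∈ Ico 1 p) :
    (k : ZMod (p^3)) * (k : ZMod (p^3))⁻¹ = 1 :=
  ZMod.coe_mul_inv_eq_one k (coprime_pow hk)

lemma isUnit_k {k : ℕ} (hk : k ∈ Ico 1 p) : IsUnit (k : ZMod (p^3)) :=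
  (ZMod.isUnit_iff_coprime k (p^3)).mpr (coprime_pow hk)

def phi (p : ℕ) : ZMod (p^3) →+* ZMod p :=
  ZMod.castHom (dvd_pow_self p (by norm_num)) (ZMod p)

lemma phi_natCast (k : ℕ) : phi p ((k : ℕ) : ZMod (p^3)) = (k : ZMod p) :=
  map_natCast _ _

lemma eq_p_mul_of_phi_zero {x : ZMod (p^3)} (h : phi p x = 0) :
    ∃ y : ZMod (p^3), x = (p : ZMod (p^3)) * y := by
  have hp := (Fact.out : p.Prime)
  haveI : NeZero (p^3) := ⟨pow_ne_zero _ hp.ne_zero⟩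
  have hx : ((x.val : ℕ) : ZMod (p^3)) = x := ZMod.natCast_rightInverse x
  have h2 : ((x.val : ℕ) : ZMod p) = 0 := by
    rw [← phi_natCast, hx, h]
  rw [ZMod.natCast_eq_zero_iff] at h2
  obtain ⟨m, hm⟩ := h2
  refine ⟨(m : ZMod (p^3)), ?_⟩
  rw [← hx, hm]
  push_cast
  ring

lemma p2_mul_eq_zero {x : ZMod (p^3)} (h : phi p x = 0) :
    (p : ZMod (p^3))^2 * x = 0 := by
  obtain ⟨y, rfl⟩ := eq_p_mul_of_phi_zero h
  have : (p : ZMod (p^3))^2 * ((p : ZMod (p^3)) * y) = ((p : ZMod (p^3)))^3 * y := by ring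
  rw [this, pcube_zero, zero_mul]

lemma phi_inv {k : ℕ} (hk : k ∈ Ico 1 p) :
    phi p ((k : ZMod (p^3))⁻¹) = ((k : ZMod p))⁻¹ := by
  have h1 : (k : ZMod p) * phi p ((k : ZMod (p^3))⁻¹) = 1 := by
    rw [← phi_natCast k, ← map_mul, unit_k hk, map_one]
  exact eq_inv_of_mul_eq_one_right h1

end W19

namespace W19
open Finset
variable {p : ℕ} [Fact p.Prime]

omit [Fact p.Prime] in
lemma nat_id (n k : ℕ) (hn : 1 ≤ n) (hk : 1 ≤ k) :
    n * (n-1).choose (k-1) = n.choose k * k := by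
  obtain ⟨m, rfl⟩ : ∃ m, n = m + 1 := ⟨n - 1, by omega⟩
  obtain ⟨j, rfl⟩ : ∃ j, k = j + 1 := ⟨k - 1, by omega⟩
  simpa using Nat.add_one_mul_choose_eq m j

lemma dvd_choose_two_p {k : ℕ} (hk : k ∈ Ico 1 p) : p ∣ (2*p).choose k := by
  have hp := (Fact.out : p.Prime)
  rw [mem_Ico] at hk
  have hid := nat_id (2*p) k (by omega) (by omega)
  have hdvd : p ∣ (2*p).choose k * k := by
    refine ⟨2 * (2*p-1).choose (k-1), ?_⟩
    rw [← hid]; ring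
  rcases (Nat.Prime.dvd_mul hp).mp hdvd with h | h
  · exact h
  · exact absurd h (Nat.not_dvd_of_pos_of_lt (by omega) hk.2)

lemma choose_pred_mod (j : ℕ) (hj : j ≤ p - 1) :
    (((p-1).choose j : ℕ) : ZMod p) = (-1)^j := by
  have hp := (Fact.out : p.Prime)
  have hp2 : 2 ≤ p := hp.two_le
  induction j with
  | zero => simp
  | succ j ih =>
    have hzero : ((p.choose (j+1) : ℕ) : ZMod p) = 0 := by
      rw [ZMod.natCast_eq_zero_iff]
      exact hp.dvd_choose_self (Nat.succ_ne_zero j) (by omega)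
    have hpascal : p.choose (j+1) = (p-1).choose j + (p-1).choose (j+1) := by
      obtain ⟨q, rfl⟩ : ∃ q, p = q + 1 := ⟨p - 1, by omega⟩
      simpa using Nat.choose_succ_succ q j
    rw [hpascal] at hzero
    push_cast at hzero
    rw [ih (by omega)] at hzero
    have : (((p-1).choose (j+1) : ℕ) : ZMod p) = -(-1)^j := by linear_combination hzero
    rw [this]
    ring

lemma choose_two_pred_mod (j : ℕ) (hj : j ≤ p - 1) :
    (((2*p-1).choose j : ℕ) : ZMod p) = (-1)^j := by
  have hp := (Fact.out : p.Prime)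
  have hp2 : 2 ≤ p := hp.two_le
  induction j with
  | zero => simp
  | succ j ih =>
    have hzero : (((2*p).choose (j+1) : ℕ) : ZMod p) = 0 := by
      rw [ZMod.natCast_eq_zero_iff]
      exact dvd_choose_two_p (mem_Ico.mpr ⟨by omega, by omega⟩)
    have hpascal : (2*p).choose (j+1) = (2*p-1).choose j + (2*p-1).choose (j+1) := by
      obtain ⟨q, hq⟩ : ∃ q, 2*p = q + 1 := ⟨2*p - 1, by omega⟩
      rw [hq]
      simp only [Nat.add_sub_cancel]
      simpa using Nat.choose_succ_succ q j
    rw [hpascal] at hzero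
    push_cast at hzero
    rw [ih (by omega)] at hzero
    have : (((2*p-1).choose (j+1) : ℕ) : ZMod p) = -(-1)^j := by linear_combination hzero
    rw [this]
    ring

lemma choose_p_cast {k : ℕ} (hk : k ∈ Ico 1 p) :
    ((p.choose k : ℕ) : ZMod (p^3)) =
      (p : ZMod (p^3)) * ((k : ZMod (p^3))⁻¹ * (((p-1).choose (k-1) : ℕ) : ZMod (p^3))) := by
  have hp := (Fact.out : p.Prime)
  have hk' := mem_Ico.mp hk
  have hid := nat_id p k (by omega) (by omega)
  have hcast : (p : ZMod (p^3)) * (((p-1).choose (k-1) : ℕ) : ZMod (p^3)) =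
      ((p.choose k : ℕ) : ZMod (p^3)) * (k : ZMod (p^3)) := by
    have := congrArg (fun n : ℕ => (n : ZMod (p^3))) hid
    push_cast at this
    exact this
  have := congrArg (fun x => x * (k : ZMod (p^3))⁻¹) hcast
  rw [mul_assoc ((p.choose k : ℕ) : ZMod (p^3)) _ _, unit_k hk, mul_one] at this
  rw [← this]
  ring

lemma choose_2p_cast {k : ℕ} (hk : k ∈ Ico 1 p) :
    (((2*p).choose k : ℕ) : ZMod (p^3)) =
      2 * (p : ZMod (p^3)) * ((k : ZMod (p^3))⁻¹ * (((2*p-1).choose (k-1) : ℕ) : ZMod (p^3))) := by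
  have hp := (Fact.out : p.Prime)
  have hk' := mem_Ico.mp hk
  have hid := nat_id (2*p) k (by omega) (by omega)
  have h2p : (2*p : ℕ) - 1 = 2*p - 1 := rfl
  have hcast : 2 * (p : ZMod (p^3)) * (((2*p-1).choose (k-1) : ℕ) : ZMod (p^3)) =
      (((2*p).choose k : ℕ) : ZMod (p^3)) * (k : ZMod (p^3)) := by
    have := congrArg (fun n : ℕ => (n : ZMod (p^3))) hid
    push_cast at this
    linear_combination this
  have := congrArg (fun x => x * (k : ZMod (p^3))⁻¹) hcast
  rw [mul_assoc (((2*p).choose k : ℕ) : ZMod (p^3)) _ _, unit_k hk, mul_one] at this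
  rw [← this]
  ring

end W19

namespace W19
open Finset
variable {p : ℕ} [Fact p.Prime]

omit [Fact p.Prime] in
lemma prod_one_add {R : Type*} [CommRing R] (c : R) (hc : c^3 = 0) (x : ℕ → R) (s : Finset ℕ) :
    ∃ E : R, (∏ k ∈ s, (1 + c * x k)) = 1 + c * (∑ k ∈ s, x k) + c^2 * E ∧
      2 * E = (∑ k ∈ s, x k)^2 - ∑ k ∈ s, (x k)^2 := by
  classical
  induction s using Finset.induction_on with
  | empty => exact ⟨0, by simp⟩
  | insert _ _ ha ih =>
    rename_i a s
    obtain ⟨E, hE, h2E⟩ := ih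
    refine ⟨E + x a * (∑ k ∈ s, x k), ?_, ?_⟩
    · rw [Finset.prod_insert ha, hE, Finset.sum_insert ha]
      linear_combination (x a * E) * hc
    · rw [Finset.sum_insert ha, Finset.sum_insert ha]
      linear_combination h2E

omit [Fact p.Prime] in
lemma asc_prod (n : ℕ) : ∀ k, n.ascFactorial k = ∏ i ∈ range k, (n + i)
  | 0 => by simp
  | k + 1 => by
    rw [Nat.ascFactorial_succ, asc_prod n k, Finset.prod_range_succ]
    ring

lemma mem_reflect {k : ℕ} (hk : k ∈ Ico 1 p) : p - k ∈ Ico 1 p := by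
  rw [mem_Ico] at *
  omega

lemma isUnit_two (hp5 : 5 ≤ p) : IsUnit (2 : ZMod (p^3)) := by
  have hp := (Fact.out : p.Prime)
  have : ((2 : ℕ) : ZMod (p^3)) = (2 : ZMod (p^3)) := by norm_num
  have h2 : ¬ (p ∣ 2) := fun h => by have := Nat.le_of_dvd (by norm_num) h; omega
  rw [← this, ZMod.isUnit_iff_coprime]
  exact Nat.Coprime.pow_right _ (Nat.coprime_comm.mp ((hp.coprime_iff_not_dvd).mpr h2))

lemma isUnit_factorial (hp5 : 5 ≤ p) : IsUnit (((p-1).factorial : ℕ) : ZMod (p^3)) := by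
  have hp := (Fact.out : p.Prime)
  rw [ZMod.isUnit_iff_coprime]
  apply Nat.Coprime.pow_right
  rw [Nat.coprime_comm]
  apply (hp.coprime_iff_not_dvd).mpr
  intro h
  have := (Nat.Prime.dvd_factorial hp).mp h
  omega

lemma wolstenholme_aux (hp5 : 5 ≤ p) : (((2*p-1).choose (p-1) : ℕ) : ZMod (p^3)) = 1 := by
  have hp := (Fact.out : p.Prime)
  set x : ℕ → ZMod (p^3) := fun k => ((k : ℕ) : ZMod (p^3))⁻¹ with hx
  set S1 := ∑ k ∈ Ico 1 p, x k with hS1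
  set T := ∑ k ∈ Ico 1 p, x k * x (p - k) with hT
  -- pointwise pairing identity
  have hpair : ∀ k ∈ Ico 1 p, x k + x (p - k) = (p : ZMod (p^3)) * (x k * x (p - k)) := by
    intro k hk
    have hk2 := mem_reflect hk
    have hA := unit_k hk
    have hB := unit_k hk2
    have hC : (((p - k : ℕ) : ℕ) : ZMod (p^3)) = (p : ZMod (p^3)) - (k : ZMod (p^3)) := by
      rw [Nat.cast_sub (le_of_lt (mem_Ico.mp hk).2)]
    have hunit : IsUnit ((k : ZMod (p^3)) * (((p - k : ℕ) : ℕ) : ZMod (p^3))) :=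
      (isUnit_k hk).mul (isUnit_k hk2)
    apply hunit.mul_right_cancel
    calc (x k + x (p - k)) * ((k : ZMod (p^3)) * (((p - k : ℕ) : ℕ) : ZMod (p^3)))
        = (((p - k : ℕ) : ℕ) : ZMod (p^3)) * ((k : ZMod (p^3)) * x k)
          + (k : ZMod (p^3)) * ((((p - k : ℕ) : ℕ) : ZMod (p^3)) * x (p - k)) := by ring
      _ = (((p - k : ℕ) : ℕ) : ZMod (p^3)) + (k : ZMod (p^3)) := by rw [hA, hB]; ring
      _ = (p : ZMod (p^3)) := by rw [hC]; ring
      _ = (p : ZMod (p^3)) * (((k : ZMod (p^3)) * x k) * ((((p - k : ℕ) : ℕ) : ZMod (p^3)) * x (p - k))) := by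
          rw [hA, hB]; ring
      _ = (p : ZMod (p^3)) * (x k * x (p - k)) * ((k : ZMod (p^3)) * (((p - k : ℕ) : ℕ) : ZMod (p^3))) := by ring
  -- 2 S1 = p T
  have h2S1 : 2 * S1 = (p : ZMod (p^3)) * T := by
    have hrefl : S1 = ∑ k ∈ Ico 1 p, x (p - k) := sum_reflect x
    calc 2 * S1 = S1 + S1 := by ring
      _ = ∑ k ∈ Ico 1 p, (x k + x (p - k)) := by
          rw [Finset.sum_add_distrib, ← hS1, ← hrefl]
      _ = ∑ k ∈ Ico 1 p, (p : ZMod (p^3)) * (x k * x (p - k)) := Finset.sum_congr rfl hpair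
      _ = (p : ZMod (p^3)) * T := by rw [hT, Finset.mul_sum]
  -- phi T = 0
  have hphiT : phi p T = 0 := by
    rw [hT, map_sum]
    have : ∀ k ∈ Ico 1 p, phi p (x k * x (p - k)) = -(((k : ZMod p))⁻¹)^2 := by
      intro k hk
      have hk2 := mem_reflect hk
      rw [map_mul, hx]
      simp only
      rw [phi_inv hk, phi_inv hk2]
      have hC : (((p - k : ℕ) : ℕ) : ZMod p) = -(k : ZMod p) := by
        rw [Nat.cast_sub (le_of_lt (mem_Ico.mp hk).2), ZMod.natCast_self, zero_sub]
      rw [hC, inv_neg]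
      ring
    rw [Finset.sum_congr rfl this, Finset.sum_neg_distrib, sum_inv_sq hp5, neg_zero]
  obtain ⟨t, ht⟩ := eq_p_mul_of_phi_zero hphiT
  -- p * S1 = 0
  have hpS1 : (p : ZMod (p^3)) * S1 = 0 := by
    apply (isUnit_two hp5).mul_left_cancel
    calc (2 : ZMod (p^3)) * ((p : ZMod (p^3)) * S1)
        = (p : ZMod (p^3)) * (2 * S1) := by ring
      _ = (p : ZMod (p^3)) * ((p : ZMod (p^3)) * ((p : ZMod (p^3)) * t)) := by rw [h2S1, ht]
      _ = (p : ZMod (p^3))^3 * t := by ring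
      _ = 0 := by rw [pcube_zero]; ring
      _ = 2 * 0 := by ring
  -- phi S2 = 0 hence p^2 * S2 = 0
  have hphiS2 : phi p (∑ k ∈ Ico 1 p, (x k)^2) = 0 := by
    rw [map_sum]
    have : ∀ k ∈ Ico 1 p, phi p ((x k)^2) = (((k : ZMod p))⁻¹)^2 := by
      intro k hk
      rw [map_pow, hx]
      simp only
      rw [phi_inv hk]
    rw [Finset.sum_congr rfl this, sum_inv_sq hp5]
  have hp2S2 := p2_mul_eq_zero hphiS2
  -- product
  obtain ⟨E, hE, h2E⟩ := prod_one_add (p : ZMod (p^3)) pcube_zero x (Ico 1 p)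
  have hp2E : (p : ZMod (p^3))^2 * E = 0 := by
    apply (isUnit_two hp5).mul_left_cancel
    calc (2 : ZMod (p^3)) * ((p : ZMod (p^3))^2 * E)
        = (p : ZMod (p^3))^2 * (2 * E) := by ring
      _ = (p : ZMod (p^3))^2 * (S1^2 - ∑ k ∈ Ico 1 p, (x k)^2) := by rw [h2E]
      _ = ((p : ZMod (p^3)) * S1)^2 - (p : ZMod (p^3))^2 * (∑ k ∈ Ico 1 p, (x k)^2) := by ring
      _ = 0 := by rw [hpS1, hp2S2]; ring
      _ = 2 * 0 := by ring
  have hprod1 : ∏ k ∈ Ico 1 p, (1 + (p : ZMod (p^3)) * x k) = 1 := by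
    rw [hE, hpS1, hp2E]
    ring
  -- identify products
  have hterm : ∀ k ∈ Ico 1 p, (((k + p : ℕ) : ℕ) : ZMod (p^3))
      = ((k : ℕ) : ZMod (p^3)) * (1 + (p : ZMod (p^3)) * x k) := by
    intro k hk
    have hA := unit_k hk
    push_cast
    calc ((k : ℕ) : ZMod (p^3)) + (p : ZMod (p^3))
        = (k : ZMod (p^3)) + (p : ZMod (p^3)) * ((k : ZMod (p^3)) * x k) := by rw [hA]; ring
      _ = ((k : ℕ) : ZMod (p^3)) * (1 + (p : ZMod (p^3)) * x k) := by ring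
  have hfact : ∏ k ∈ Ico 1 p, ((k : ℕ) : ZMod (p^3)) = (((p-1).factorial : ℕ) : ZMod (p^3)) := by
    have h : ∏ k ∈ Ico 1 p, k = (p-1).factorial := by
      conv_lhs => rw [show p = (p-1)+1 by omega]
      exact Finset.prod_Ico_id_eq_factorial _
    rw [← Nat.cast_prod, h]
  have hprodid : ∏ k ∈ Ico 1 p, (((k + p : ℕ) : ℕ) : ZMod (p^3))
      = (((p-1).factorial : ℕ) : ZMod (p^3)) := by
    rw [Finset.prod_congr rfl hterm, Finset.prod_mul_distrib, hfact, hprod1, mul_one]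
  -- nat identity
  have hnat : ∏ k ∈ Ico 1 p, (k + p) = (p-1).factorial * (2*p-1).choose (p-1) := by
    have h1 : ∏ k ∈ Ico 1 p, (k + p) = ∏ i ∈ range (p - 1), (1 + i + p) := by
      rw [Finset.prod_Ico_eq_prod_range]
    have h2 : (p+1).ascFactorial (p-1) = ∏ i ∈ range (p - 1), (p + 1 + i) := asc_prod _ _
    have h3 : (p+1).ascFactorial (p-1) = (p-1).factorial * (p + (p-1)).choose (p-1) :=
      Nat.ascFactorial_eq_factorial_mul_choose _ _
    have h4 : p + (p - 1) = 2*p - 1 := by omega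
    rw [h1, ← Finset.prod_congr rfl (fun i _ => by ring : ∀ i ∈ range (p-1), p + 1 + i = 1 + i + p), ← h2, h3, h4]
  -- conclude
  have := hprodid
  rw [← Nat.cast_prod] at this
  rw [hnat] at this
  push_cast at this
  refine (isUnit_factorial (p := p) hp5).mul_left_cancel ?_
  rw [mul_one]
  exact this

lemma wolstenholme (hp5 : 5 ≤ p) : (((2*p).choose p : ℕ) : ZMod (p^3)) = 2 := by
  have hp := (Fact.out : p.Prime)
  have hnat : (2*p).choose p = 2 * ((2*p-1).choose (p-1)) := by
    have hid := nat_id (2*p) p (by omega) (by omega)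
    have h5 : (2*p).choose p * p = (2 * ((2*p-1).choose (p-1))) * p := by rw [← hid]; ring
    exact Nat.eq_of_mul_eq_mul_right (by omega) h5
  rw [hnat]
  push_cast
  rw [wolstenholme_aux hp5]
  ring

end W19

namespace W19
open Finset
variable {p : ℕ} [Fact p.Prime]

lemma middle_big {a b : ℕ} (hab : 3 ≤ a + b) (v : ZMod (p^3)) :
    ∑ k ∈ Ico 1 p, v^k * ((p.choose k : ℕ) : ZMod (p^3))^a *
      (((2*p).choose k : ℕ) : ZMod (p^3))^b = 0 := by
  have hp := (Fact.out : p.Prime)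
  apply Finset.sum_eq_zero
  intro k hk
  have hk' := mem_Ico.mp hk
  obtain ⟨m, hm⟩ := hp.dvd_choose_self (by omega : k ≠ 0) (hk'.2)
  obtain ⟨m', hm'⟩ := dvd_choose_two_p hk
  rw [hm, hm']
  push_cast
  rw [mul_pow, mul_pow]
  have hzero : (p : ZMod (p^3))^a * (p : ZMod (p^3))^b = 0 := by
    rw [← pow_add, show a + b = 3 + (a+b-3) by omega, pow_add, pcube_zero, zero_mul]
  calc v^k * ((p : ZMod (p^3))^a * (m : ZMod (p^3))^a) * ((p : ZMod (p^3))^b * (m' : ZMod (p^3))^b)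
      = ((p : ZMod (p^3))^a * (p : ZMod (p^3))^b) * (v^k * (m : ZMod (p^3))^a * (m' : ZMod (p^3))^b) := by
        ring
    _ = 0 := by rw [hzero, zero_mul]

lemma middle_two (hp5 : 5 ≤ p) {a b : ℕ} (hab : a + b = 2) (hA : 1 ≤ a) {v : ZMod (p^3)}
    (hv : v = 1 ∨ v = -1) :
    ∑ k ∈ Ico 1 p, v^k * ((p.choose k : ℕ) : ZMod (p^3))^a *
      (((2*p).choose k : ℕ) : ZMod (p^3))^b = 0 := by
  have hp := (Fact.out : p.Prime)
  set W : ℕ → ZMod (p^3) := fun k => v^k * (((k : ℕ) : ZMod (p^3))⁻¹)^2 *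
    ((((p-1).choose (k-1) : ℕ) : ZMod (p^3)))^a *
    (2 * (((2*p-1).choose (k-1) : ℕ) : ZMod (p^3)))^b with hW
  have hcase : (a = 1 ∧ b = 1) ∨ (a = 2 ∧ b = 0) := by omega
  have hterm : ∀ k ∈ Ico 1 p, v^k * ((p.choose k : ℕ) : ZMod (p^3))^a *
      (((2*p).choose k : ℕ) : ZMod (p^3))^b = (p : ZMod (p^3))^2 * W k := by
    intro k hk
    rw [choose_p_cast hk, choose_2p_cast hk, hW]
    simp only
    rcases hcase with ⟨ha', hb'⟩ | ⟨ha', hb'⟩ <;> subst ha' <;> subst hb' <;> ring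
  rw [Finset.sum_congr rfl hterm, ← Finset.mul_sum]
  apply p2_mul_eq_zero
  rw [map_sum]
  set w := phi p v with hww
  have hw : w = 1 ∨ w = -1 := by
    rcases hv with rfl | rfl
    · left; exact map_one _
    · right; rw [hww, map_neg, map_one]
  have hphiW : ∀ k ∈ Ico 1 p, phi p (W k) = 2^b * (w^k * (((k : ZMod p))⁻¹)^2) := by
    intro k hk
    have hk' := mem_Ico.mp hk
    have hk1 : k - 1 ≤ p - 1 := by omega
    have hsq : ((-1 : ZMod p)^(k-1))^2 = 1 := by
      rw [← pow_mul, mul_comm, pow_mul, neg_one_sq, one_pow]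
    rw [hW]
    simp only [map_mul, map_pow, map_one, map_ofNat, phi_natCast, phi_inv hk]
    rw [choose_pred_mod (k-1) hk1, choose_two_pred_mod (k-1) hk1]
    rcases hcase with ⟨ha', hb'⟩ | ⟨ha', hb'⟩ <;> subst ha' <;> subst hb'
    · linear_combination (2 * w^k * (((k : ZMod p))⁻¹)^2) * hsq
    · linear_combination (w^k * (((k : ZMod p))⁻¹)^2) * hsq
  rw [Finset.sum_congr rfl hphiW, ← Finset.mul_sum, sum_sign_inv_sq hp5 hw, mul_zero]

lemma total (hp5 : 5 ≤ p) {a b : ℕ} {v : ZMod (p^3)} (hv : v = 1 ∨ v = -1)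
    (hmid : ∑ k ∈ Ico 1 p, v^k * ((p.choose k : ℕ) : ZMod (p^3))^a *
      (((2*p).choose k : ℕ) : ZMod (p^3))^b = 0) :
    ∑ k ∈ range (p+1), v^k * ((p.choose k : ℕ) : ZMod (p^3))^a *
      (((2*p).choose k : ℕ) : ZMod (p^3))^b = 1 + v * 2^b := by
  have hp := (Fact.out : p.Prime)
  have hodd : Odd p := hp.odd_of_ne_two (by omega)
  rw [Finset.sum_range_succ, range_eq_Ico, Finset.sum_eq_sum_Ico_succ_bot (by omega : 0 < p)]
  have h0 : v^0 * ((p.choose 0 : ℕ) : ZMod (p^3))^a * (((2*p).choose 0 : ℕ) : ZMod (p^3))^b = 1 := by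
    simp
  have hmid' : ∑ k ∈ Ico (0+1) p, v^k * ((p.choose k : ℕ) : ZMod (p^3))^a *
      (((2*p).choose k : ℕ) : ZMod (p^3))^b = 0 := by
    simpa using hmid
  have hvp : v^p = v := by
    rcases hv with rfl | rfl
    · rw [one_pow]
    · exact hodd.neg_one_pow
  have hlast : v^p * ((p.choose p : ℕ) : ZMod (p^3))^a * (((2*p).choose p : ℕ) : ZMod (p^3))^b
      = v * 2^b := by
    rw [hvp, Nat.choose_self, wolstenholme hp5]
    norm_num
  rw [h0, hmid', hlast]
  ring

end W19

theorem stmt_19 (p : ℕ) (hp : p.Prime) (hp5 : 5 ≤ p) (ε : ℤ) (a b : ℕ) (ha : 1 ≤ a)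
    (hexcl : Even ε → (a, b) ≠ (0, 1) ∧ (a, b) ≠ (1, 0)) :
    (∑ k ∈ Finset.range (p + 1),
        (((-1 : ℤˣ) ^ (ε * (k : ℤ)) : ℤˣ) : ℤ) * (p.choose k : ℤ) ^ a *
          ((2 * p).choose k : ℤ) ^ b) ≡
      1 + (((-1 : ℤˣ) ^ ε : ℤˣ) : ℤ) * 2 ^ b [ZMOD ((p : ℤ) ^ 3)] := by
  haveI : Fact p.Prime := ⟨hp⟩
  have hsum : (∑ k ∈ Finset.range (p + 1),
      (((-1 : ℤˣ) ^ (ε * (k : ℤ)) : ℤˣ) : ℤ) * (p.choose k : ℤ) ^ a * ((2 * p).choose k : ℤ) ^ b)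
      = ∑ k ∈ Finset.range (p + 1),
        (((-1 : ℤˣ) ^ ε : ℤˣ) : ℤ) ^ k * (p.choose k : ℤ) ^ a * ((2 * p).choose k : ℤ) ^ b := by
    refine Finset.sum_congr rfl fun k _ => ?_
    rw [zpow_mul, zpow_natCast, Units.val_pow_eq_pow_val]
  rw [hsum]
  set u : ℤ := (((-1 : ℤˣ) ^ ε : ℤˣ) : ℤ) with huu
  have hmod : ((p : ℤ))^3 = ((p^3 : ℕ) : ℤ) := by push_cast; ring
  rw [hmod, ← ZMod.intCast_eq_intCast_iff]
  push_cast
  rcases Int.even_or_odd ε with hev | hod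
  · -- even case, u = 1
    obtain ⟨m, hm⟩ := hev
    have hu1 : u = 1 := by
      rw [huu, hm, zpow_add, Int.units_mul_self, Units.val_one]
    have hne := hexcl ⟨m, hm⟩
    have hv1 : ((u : ℤ) : ZMod (p^3)) = 1 := by rw [hu1]; norm_num
    have hv : ((u : ℤ) : ZMod (p^3)) = 1 ∨ ((u : ℤ) : ZMod (p^3)) = -1 := Or.inl hv1
    by_cases h3 : 3 ≤ a + b
    · exact W19.total hp5 hv (W19.middle_big h3 _)
    · have h10 : ¬(a = 1 ∧ b = 0) := by
        rintro ⟨rfl, rfl⟩; exact hne.2 rfl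
      have hab : a + b = 2 := by omega
      exact W19.total hp5 hv (W19.middle_two hp5 hab ha hv)
  · -- odd case, u = -1
    obtain ⟨m, hm⟩ := hod
    have hu1 : u = -1 := by
      rw [huu, hm, zpow_add, zpow_one, zpow_mul]
      have h2 : ((-1 : ℤˣ) ^ (2:ℤ)) = 1 := by decide
      rw [h2, one_zpow, one_mul, Units.val_neg, Units.val_one]
    have hv1 : ((u : ℤ) : ZMod (p^3)) = -1 := by rw [hu1]; push_cast; ring
    have hv : ((u : ℤ) : ZMod (p^3)) = 1 ∨ ((u : ℤ) : ZMod (p^3)) = -1 := Or.inr hv1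
    by_cases h3 : 3 ≤ a + b
    · exact W19.total hp5 hv (W19.middle_big h3 _)
    · by_cases h10 : a = 1 ∧ b = 0
      · obtain ⟨rfl, rfl⟩ := h10
        have hz : ∑ k ∈ Finset.range (p+1), (-1 : ℤ)^k * (p.choose k : ℤ) = 0 :=
          Int.alternating_sum_range_choose_of_ne (by omega)
        have hcast : ((∑ k ∈ Finset.range (p+1), (-1 : ℤ)^k * (p.choose k : ℤ) : ℤ) : ZMod (p^3)) = 0 := by
          rw [hz]; norm_num
        push_cast at hcast
        rw [hv1]
        calc ∑ k ∈ Finset.range (p+1), (-1 : ZMod (p^3))^k * ((p.choose k : ℕ) : ZMod (p^3))^1 *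
              (((2*p).choose k : ℕ) : ZMod (p^3))^0
            = ∑ k ∈ Finset.range (p+1), (-1 : ZMod (p^3))^k * ((p.choose k : ℕ) : ZMod (p^3)) := by
              refine Finset.sum_congr rfl fun k _ => ?_; ring
          _ = 0 := hcast
          _ = 1 + (-1) * 2^0 := by ring
      · have hab : a + b = 2 := by omega
        exact W19.total hp5 hv (W19.middle_two hp5 hab ha hv)
end
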